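/- arXiv:1809.06048 — 8 statements merged into one kernel-verified Lean document; each statement's English description precedes it below -/
import Mathlib

section
/- Let X and Y be Banach spaces. If X and Y are almost square (ASQ), then the projective tensor product X ⊗̂π Y is almost square. -/
/-!
Approximate each unit vector `zᵢ` of `X ⊗̂π Y` within `ε` by a convex combination of elementary
tensors `xⱼ ⊗ yⱼ` of unit vectors, and use that `X` and `Y` are ASQ to find `a`, `b` of norm
almost one with `‖xⱼ ± a‖, ‖yⱼ ± b‖ ≤ 1 + ε` for all `j`. The polarization identity
`2 (x ⊗ y + a ⊗ b) = (x + a) ⊗ (y + b) + (x - a) ⊗ (y - b)` bounds `‖xⱼ ⊗ yⱼ ± a ⊗ b‖`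
by `(1 + ε)²`, and this bound passes to convex combinations, so `a ⊗ b` is the required vector
for the `zᵢ`.
-/

open Filter Topology Metric

def ASQ (X : Type*) [NormedAddCommGroup X] [NormedSpace ℝ X] : Prop :=
  ∀ (k : ℕ) (x : Fin k → X), (∀ i, ‖x i‖ = 1) →
    ∃ y : ℕ → X, (∀ n, ‖y n‖ ≤ 1) ∧ Tendsto (fun n => ‖y n‖) atTop (𝓝 1) ∧
      ∀ i, Tendsto (fun n => ‖x i + y n‖) atTop (𝓝 1) ∧
        Tendsto (fun n => ‖x i - y n‖) atTop (𝓝 1)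

section ASQ

variable {X : Type*} [NormedAddCommGroup X] [NormedSpace ℝ X]

theorem ASQ.exists_approx (hX : ASQ X) {ι : Type*} [Finite ι] (x : ι → X)
    (hx : ∀ i, ‖x i‖ = 1) {ε : ℝ} (hε : 0 < ε) :
    ∃ y : X, ‖y‖ ≤ 1 ∧ 1 - ε ≤ ‖y‖ ∧ ∀ i, ‖x i + y‖ ≤ 1 + ε ∧ ‖x i - y‖ ≤ 1 + ε := by
  obtain ⟨k, ⟨e⟩⟩ := Finite.exists_equiv_fin ι
  obtain ⟨y, hy1, hy, hxy⟩ := hX k (x ∘ e.symm) fun i => hx _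
  have hI : Set.Icc (1 - ε) (1 + ε) ∈ 𝓝 (1 : ℝ) := Icc_mem_nhds (by linarith) (by linarith)
  obtain ⟨n, hn, hxn⟩ := ((hy.eventually_mem hI).and <| eventually_all.2 fun i =>
    ((hxy i).1.eventually_mem hI).and ((hxy i).2.eventually_mem hI)).exists
  exact ⟨y n, hy1 n, hn.1, fun i => by simpa using And.intro (hxn (e i)).1.2 (hxn (e i)).2.2⟩

theorem two_mul_norm_le_norm_add_add_norm_sub (x y : X) : 2 * ‖x‖ ≤ ‖x + y‖ + ‖x - y‖ :=
  calc 2 * ‖x‖ = ‖(x + y) + (x - y)‖ := by rw [add_add_sub_cancel, ← two_smul ℝ, norm_smul,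
        Real.norm_two]
    _ ≤ ‖x + y‖ + ‖x - y‖ := norm_add_le _ _

theorem ASQ.of_forall_exists_approx
    (h : ∀ (k : ℕ) (x : Fin k → X), (∀ i, ‖x i‖ = 1) → ∀ ε > 0,
      ∃ y : X, ‖y‖ ≤ 1 ∧ 1 - ε ≤ ‖y‖ ∧ ∀ i, ‖x i + y‖ ≤ 1 + ε ∧ ‖x i - y‖ ≤ 1 + ε) :
    ASQ X := by
  intro k x hx
  choose y hy1 hy hxy using fun n : ℕ => h k x hx (1 / (n + 1)) Nat.one_div_pos_of_nat
  have hε : Tendsto (fun n : ℕ => 1 / ((n : ℝ) + 1)) atTop (𝓝 0) :=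
    tendsto_one_div_add_atTop_nhds_zero_nat
  have hlo : Tendsto (fun n : ℕ => 1 - 1 / ((n : ℝ) + 1)) atTop (𝓝 1) := by
    simpa using tendsto_const_nhds.sub hε
  have hhi : Tendsto (fun n : ℕ => 1 + 1 / ((n : ℝ) + 1)) atTop (𝓝 1) := by
    simpa using tendsto_const_nhds.add hε
  refine ⟨y, hy1, tendsto_of_tendsto_of_tendsto_of_le_of_le hlo tendsto_const_nhds hy hy1,
    fun i => ⟨?_, ?_⟩⟩
  · refine tendsto_of_tendsto_of_tendsto_of_le_of_le hlo hhi (fun n => ?_) fun n => (hxy n i).1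
    linarith [(hxy n i).2, two_mul_norm_le_norm_add_add_norm_sub (x i) (y n), hx i]
  · refine tendsto_of_tendsto_of_tendsto_of_le_of_le hlo hhi (fun n => ?_) fun n => (hxy n i).2
    linarith [(hxy n i).1, two_mul_norm_le_norm_add_add_norm_sub (x i) (y n), hx i]

end ASQ

theorem exists_finite_subset_dist_convexHull_lt {E : Type*} [SeminormedAddCommGroup E]
    [Module ℝ E] {ι : Type*} [Finite ι] {s : Set E} {z : ι → E}
    (hz : ∀ i, z i ∈ closure (convexHull ℝ s)) {ε : ℝ} (hε : 0 < ε) :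
    ∃ t ⊆ s, t.Finite ∧ ∀ i, ∃ u ∈ convexHull ℝ t, dist (z i) u < ε := by
  choose u hu hzu using fun i => Metric.mem_closure_iff.1 (hz i) ε hε
  choose t hts hut using fun i =>
    Set.mem_iUnion₂.1 <| (convexHull_eq_union_convexHull_finite_subsets s).subset (hu i)
  refine ⟨⋃ i, (t i : Set E), Set.iUnion_subset hts, Set.finite_iUnion fun i => (t i).finite_toSet,
    fun i => ⟨u i, convexHull_mono (Set.subset_iUnion (fun i => (t i : Set E)) i) (hut i), hzu i⟩⟩

section Bilinear

variable {X Y Z : Type*} [NormedAddCommGroup X] [NormedSpace ℝ X]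
  [NormedAddCommGroup Y] [NormedSpace ℝ Y] [NormedAddCommGroup Z] [NormedSpace ℝ Z]

theorem norm_apply_add_apply_le (φ : X →L[ℝ] Y →L[ℝ] Z) {x a : X} {y b : Y} {c d : ℝ}
    (hxa : ‖x + a‖ ≤ c) (hxa' : ‖x - a‖ ≤ c) (hyb : ‖y + b‖ ≤ d) (hyb' : ‖y - b‖ ≤ d) :
    ‖φ x y + φ a b‖ ≤ ‖φ‖ * c * d := by
  have hpol : (2 : ℝ) • (φ x y + φ a b) = φ (x + a) (y + b) + φ (x - a) (y - b) := by
    simp only [map_add, map_sub, add_apply, sub_apply]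
    module
  have hc : 0 ≤ c := (norm_nonneg _).trans hxa
  have hadd : ‖φ (x + a) (y + b)‖ ≤ ‖φ‖ * c * d :=
    (φ.le_opNorm₂ _ _).trans (by gcongr)
  have hsub : ‖φ (x - a) (y - b)‖ ≤ ‖φ‖ * c * d :=
    (φ.le_opNorm₂ _ _).trans (by gcongr)
  have := norm_add_le (φ (x + a) (y + b)) (φ (x - a) (y - b))
  rw [← hpol, norm_smul, Real.norm_two] at this
  linarith

theorem norm_apply_sub_apply_le (φ : X →L[ℝ] Y →L[ℝ] Z) {x a : X} {y b : Y} {c d : ℝ}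
    (hxa : ‖x + a‖ ≤ c) (hxa' : ‖x - a‖ ≤ c) (hyb : ‖y + b‖ ≤ d) (hyb' : ‖y - b‖ ≤ d) :
    ‖φ x y - φ a b‖ ≤ ‖φ‖ * c * d := by
  simpa [sub_eq_add_neg] using
    norm_apply_add_apply_le φ (b := -b) hxa hxa' (by rwa [← sub_eq_add_neg]) (by rwa [sub_neg_eq_add])

theorem exists_norm_add_apply_le_of_mem_convexHull (φ : X →L[ℝ] Y →L[ℝ] Z) (hφ : ‖φ‖ ≤ 1)
    (hX : ASQ X) (hY : ASQ Y) {t : Set Z} (ht : t.Finite)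
    (hts : t ⊆ {z : Z | ∃ x y, ‖x‖ = 1 ∧ ‖y‖ = 1 ∧ z = φ x y}) {ε : ℝ} (hε : 0 < ε) :
    ∃ (a : X) (b : Y), (‖a‖ ≤ 1 ∧ 1 - ε ≤ ‖a‖) ∧ (‖b‖ ≤ 1 ∧ 1 - ε ≤ ‖b‖) ∧
      ∀ v ∈ convexHull ℝ t, ‖v + φ a b‖ ≤ (1 + ε) ^ 2 ∧ ‖v - φ a b‖ ≤ (1 + ε) ^ 2 := by
  choose x y hx hy hv using hts
  have : Finite t := ht.to_subtype
  obtain ⟨a, ha1, ha, hxsa⟩ := hX.exists_approx (fun v : t => x v.2) (fun v => hx v.2) hε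
  obtain ⟨b, hb1, hb, hysb⟩ := hY.exists_approx (fun v : t => y v.2) (fun v => hy v.2) hε
  have hbound : ‖φ‖ * (1 + ε) * (1 + ε) ≤ (1 + ε) ^ 2 := by nlinarith [norm_nonneg φ]
  suffices t ⊆ closedBall (-φ a b) ((1 + ε) ^ 2) ∩ closedBall (φ a b) ((1 + ε) ^ 2) by
    refine ⟨a, b, ⟨ha1, ha⟩, ⟨hb1, hb⟩, fun v hv => ?_⟩
    have := convexHull_min this ((convex_closedBall _ _).inter (convex_closedBall _ _)) hv
    simpa [mem_closedBall, dist_eq_norm] using this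
  intro v hvt
  obtain ⟨hxa, hxa'⟩ := hxsa ⟨v, hvt⟩
  obtain ⟨hyb, hyb'⟩ := hysb ⟨v, hvt⟩
  simp only [Set.mem_inter_iff, mem_closedBall, dist_eq_norm, sub_neg_eq_add]
  rw [hv hvt]
  exact ⟨(norm_apply_add_apply_le φ hxa hxa' hyb hyb').trans hbound,
    (norm_apply_sub_apply_le φ hxa hxa' hyb hyb').trans hbound⟩

end Bilinear

theorem stmt2_general {X Y Z : Type*} [NormedAddCommGroup X] [NormedSpace ℝ X]
    [NormedAddCommGroup Y] [NormedSpace ℝ Y]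
    [NormedAddCommGroup Z] [NormedSpace ℝ Z]
    (φ : X →L[ℝ] Y →L[ℝ] Z)
    (hcross : ∀ x y, ‖φ x y‖ = ‖x‖ * ‖y‖)
    (hball : closure (convexHull ℝ {z : Z | ∃ x y, ‖x‖ = 1 ∧ ‖y‖ = 1 ∧ z = φ x y}) =
      closedBall (0 : Z) 1)
    (hX : ASQ X) (hY : ASQ Y) : ASQ Z := by
  have hφ : ‖φ‖ ≤ 1 := φ.opNorm_le_bound₂ zero_le_one fun x y => by rw [hcross, one_mul]
  refine ASQ.of_forall_exists_approx fun k z hz ε hε => ?_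
  -- so that `1 - ε ≤ (1 - η) ^ 2` and `(1 + η) ^ 2 + η ≤ 1 + ε`
  set η := min (ε / 4) 1
  have hη : 0 < η := lt_min (by positivity) one_pos
  have hηε : η ≤ ε / 4 := min_le_left _ _
  have hη1 : η ≤ 1 := min_le_right _ _
  obtain ⟨t, hts, ht, hzt⟩ := exists_finite_subset_dist_convexHull_lt
    (fun i => hball ▸ mem_closedBall_zero_iff.2 (hz i).le) hη
  obtain ⟨a, b, ⟨ha1, ha⟩, ⟨hb1, hb⟩, hab⟩ :=
    exists_norm_add_apply_le_of_mem_convexHull φ hφ hX hY ht hts hη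
  refine ⟨φ a b, ?_, ?_, fun i => ?_⟩
  · rw [hcross]; nlinarith [norm_nonneg a]
  · rw [hcross]; nlinarith [mul_le_mul ha hb (by linarith) (norm_nonneg a)]
  obtain ⟨u, hu, hzu⟩ := hzt i
  rw [dist_eq_norm] at hzu
  have hadd : ‖z i + φ a b‖ ≤ ‖z i - u‖ + ‖u + φ a b‖ := by
    simpa using norm_sub_le_norm_sub_add_norm_sub (z i) u (-φ a b)
  have hsub : ‖z i - φ a b‖ ≤ ‖z i - u‖ + ‖u - φ a b‖ := norm_sub_le_norm_sub_add_norm_sub _ _ _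
  constructor <;> nlinarith [hab u hu]

/-- If `X` and `Y` are ASQ Banach spaces, then their projective tensor product is ASQ.
The projective tensor product `X ⊗̂π Y` is here a Banach space `Z` together with a
continuous bilinear map `φ` which is a cross-norm (`‖φ x y‖ = ‖x‖‖y‖`) and whose closed
unit ball is the closed convex hull of the elementary tensors of unit vectors. -/
theorem stmt2 {X Y Z : Type*} [NormedAddCommGroup X] [NormedSpace ℝ X] [CompleteSpace X]
    [NormedAddCommGroup Y] [NormedSpace ℝ Y] [CompleteSpace Y]
    [NormedAddCommGroup Z] [NormedSpace ℝ Z] [CompleteSpace Z]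
    (φ : X →L[ℝ] Y →L[ℝ] Z)
    (hcross : ∀ x y, ‖φ x y‖ = ‖x‖ * ‖y‖)
    (hball : closure (convexHull ℝ {z : Z | ∃ x y, ‖x‖ = 1 ∧ ‖y‖ = 1 ∧ z = φ x y}) =
      closedBall (0 : Z) 1)
    (hX : ASQ X) (hY : ASQ Y) : ASQ Z :=
  stmt2_general φ hcross hball hX hY
end

section
/- Let X be an almost square Banach space. Then the 2-fold projective symmetric tensor product ⊗̂_{π,s,2} X is almost square. -/
/-! The addition formula gives `‖σ x + σ y‖ ≤ (‖x + y‖² + ‖x - y‖²) / 2` for the square map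
`σ x = x ⊗ x`. Hence if `y` is an almost square direction, up to `η`, for finitely many unit
vectors `xᵢ` of `X`, then `σ y` is one, up to `(1 + η)² - 1`, for every convex combination of
the `σ xᵢ`. Finitely many unit vectors `±zⱼ` of the tensor product are approximated by such
convex combinations using finitely many `xᵢ` in total. The lower bounds `‖zⱼ ± σ y‖ ≥ 1 - ε`
come for free from `‖σ y‖ ≈ 1` and `2 ‖σ y‖ ≤ ‖zⱼ + σ y‖ + ‖zⱼ - σ y‖`. -/

open Filter Topology Metric

section ASQ

variable {X : Type*} [NormedAddCommGroup X] [NormedSpace ℝ X]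

theorem abs_norm_add_sub_one_le {x y : X} {ε : ℝ} (hy : 1 - ε ≤ ‖y‖)
    (hadd : ‖x + y‖ ≤ 1 + ε) (hsub : ‖x - y‖ ≤ 1 + ε) :
    |‖x + y‖ - 1| ≤ 3 * ε ∧ |‖x - y‖ - 1| ≤ 3 * ε := by
  have : ‖y + y‖ ≤ ‖x + y‖ + ‖x - y‖ := by simpa using norm_sub_le (x + y) (x - y)
  rw [← two_smul ℝ y, norm_smul, Real.norm_two] at this
  simp only [abs_le]
  refine ⟨⟨?_, ?_⟩, ?_, ?_⟩ <;> linarith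

theorem asq_iff_forall_finset :
    ASQ X ↔ ∀ s : Finset X, (∀ x ∈ s, ‖x‖ = 1) → ∀ ε > 0, ∃ y : X, ‖y‖ ≤ 1 ∧ 1 - ε ≤ ‖y‖ ∧
      ∀ x ∈ s, ‖x + y‖ ≤ 1 + ε ∧ ‖x - y‖ ≤ 1 + ε := by
  constructor
  · intro hX s hs ε hε
    obtain ⟨y, hy_le, hy_lim, hxy_lim⟩ :=
      hX s.card (fun i => s.equivFin.symm i) fun i => hs _ (s.equivFin.symm i).2
    have hev : ∀ᶠ n in atTop, 1 - ε ≤ ‖y n‖ ∧ ∀ i, ‖(s.equivFin.symm i : X) + y n‖ ≤ 1 + ε ∧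
        ‖(s.equivFin.symm i : X) - y n‖ ≤ 1 + ε := by
      refine (hy_lim.eventually (eventually_ge_nhds (by linarith))).and
        (eventually_all.2 fun i => ?_)
      exact ((hxy_lim i).1.eventually (eventually_le_nhds (by linarith))).and
        ((hxy_lim i).2.eventually (eventually_le_nhds (by linarith)))
    obtain ⟨n, hn_norm, hn_sum⟩ := hev.exists
    refine ⟨y n, hy_le n, hn_norm, fun x hx => ?_⟩
    simpa using hn_sum (s.equivFin ⟨x, hx⟩)
  · classical
    intro h k x hx
    have hε : ∀ n : ℕ, (0 : ℝ) < 1 / (n + 1) := fun n => by positivity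
    choose y hy_le hy_ge hxy using fun n : ℕ =>
      h (Finset.univ.image x) (by simpa using hx) _ (hε n)
    have hlim : Tendsto (fun n : ℕ => 3 * (1 / ((n : ℝ) + 1))) atTop (𝓝 0) := by
      simpa using tendsto_one_div_add_atTop_nhds_zero_nat.const_mul (3 : ℝ)
    have tendsto_one {u : ℕ → ℝ} (hu : ∀ n, |u n - 1| ≤ 3 * (1 / ((n : ℝ) + 1))) :
        Tendsto u atTop (𝓝 1) :=
      tendsto_iff_norm_sub_tendsto_zero.2 <| squeeze_zero (fun _ => norm_nonneg _)
        (fun n => (Real.norm_eq_abs _).trans_le (hu n)) hlim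
    have hclose (n : ℕ) (i : Fin k) := abs_norm_add_sub_one_le (hy_ge n)
      (hxy n (x i) (by simp)).1 (hxy n (x i) (by simp)).2
    refine ⟨y, hy_le, tendsto_one fun n => ?_, fun i => ⟨tendsto_one fun n => (hclose n i).1,
      tendsto_one fun n => (hclose n i).2⟩⟩
    rw [abs_le]
    constructor <;> linarith [hy_le n, hy_ge n, hε n]

end ASQ

theorem exists_finset_subset_thickening_convexHull_image {α Z : Type*}
    [NormedAddCommGroup Z] [NormedSpace ℝ Z] (f : α → Z) (K : Set α) (T : Finset Z)
    (hT : ↑T ⊆ closure (convexHull ℝ (f '' K))) {δ : ℝ} (hδ : 0 < δ) :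
    ∃ A : Finset α, ↑A ⊆ K ∧ ↑T ⊆ thickening δ (convexHull ℝ (f '' ↑A)) := by
  classical
  induction T using Finset.induction_on with
  | empty => exact ⟨∅, by simp, by simp⟩
  | insert z T _ ih =>
    rw [Finset.coe_insert, Set.insert_subset_iff] at hT
    obtain ⟨A, hAK, hTA⟩ := ih hT.2
    obtain ⟨u, hu, hzu⟩ := Metric.mem_closure_iff.1 hT.1 δ hδ
    rw [convexHull_eq_union_convexHull_finite_subsets] at hu
    simp only [Set.mem_iUnion, exists_prop] at hu
    obtain ⟨t, htK, hut⟩ := hu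
    obtain ⟨B, hBK, rfl⟩ := Finset.subset_set_image_iff.1 htK
    have hmono {C : Finset α} (hC : C ⊆ A ∪ B) :
        convexHull ℝ (f '' ↑C) ⊆ convexHull ℝ (f '' ↑(A ∪ B)) :=
      convexHull_mono (Set.image_mono (Finset.coe_subset.2 hC))
    refine ⟨A ∪ B, by simpa using ⟨hAK, hBK⟩, ?_⟩
    rw [Finset.coe_insert, Set.insert_subset_iff]
    refine ⟨mem_thickening_iff.2 ⟨u, hmono Finset.subset_union_right ?_, hzu⟩,
      hTA.trans (thickening_subset_of_subset δ (hmono Finset.subset_union_left))⟩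
    simpa using hut

section SquareMap

variable {X Z : Type*} [NormedAddCommGroup X] [NormedAddCommGroup Z] [NormedSpace ℝ Z]
  {σ : X → Z}

theorem norm_add_le_of_parallelogram (hnorm : ∀ x, ‖σ x‖ = ‖x‖ ^ 2)
    (haddition : ∀ x y : X, σ (x + y) + σ (x - y) = (2 : ℝ) • (σ x + σ y)) (x y : X) :
    ‖σ x + σ y‖ ≤ (‖x + y‖ ^ 2 + ‖x - y‖ ^ 2) / 2 := by
  have h := norm_add_le (σ (x + y)) (σ (x - y))
  rw [haddition, norm_smul, hnorm, hnorm, Real.norm_two] at h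
  linarith

theorem convexHull_image_subset_closedBall (hnorm : ∀ x, ‖σ x‖ = ‖x‖ ^ 2)
    (haddition : ∀ x y : X, σ (x + y) + σ (x - y) = (2 : ℝ) • (σ x + σ y)) {A : Set X}
    {y : X} {r : ℝ} (hA : ∀ x ∈ A, ‖x + y‖ ≤ r ∧ ‖x - y‖ ≤ r) :
    convexHull ℝ (σ '' A) ⊆ closedBall (-σ y) (r ^ 2) := by
  refine convexHull_min ?_ (convex_closedBall _ _)
  rintro _ ⟨x, hx, rfl⟩
  have hadd := pow_le_pow_left₀ (norm_nonneg _) (hA x hx).1 2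
  have hsub := pow_le_pow_left₀ (norm_nonneg _) (hA x hx).2 2
  rw [mem_closedBall, dist_eq_norm, sub_neg_eq_add]
  linarith [norm_add_le_of_parallelogram hnorm haddition x y]

theorem exists_forall_norm_add_sq_le [NormedSpace ℝ X] (hnorm : ∀ x, ‖σ x‖ = ‖x‖ ^ 2)
    (haddition : ∀ x y : X, σ (x + y) + σ (x - y) = (2 : ℝ) • (σ x + σ y)) (hX : ASQ X)
    {T : Finset Z} (hT : ↑T ⊆ closure (convexHull ℝ (σ '' sphere 0 1))) {ε : ℝ} (hε : 0 < ε) :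
    ∃ y : X, ‖σ y‖ ≤ 1 ∧ 1 - ε ≤ ‖σ y‖ ∧ ∀ z ∈ T, ‖z + σ y‖ ≤ 1 + ε := by
  -- small enough that `ε / 2 + (1 + η) ^ 2 ≤ 1 + ε` and `(1 - η) ^ 2 ≥ 1 - ε`
  set η := min 1 (ε / 6)
  have hη_pos : 0 < η := by positivity
  have hη_le : η ≤ 1 ∧ η ≤ ε / 6 := ⟨min_le_left _ _, min_le_right _ _⟩
  obtain ⟨A, hA, hTA⟩ := exists_finset_subset_thickening_convexHull_image σ _ T hT (half_pos hε)
  obtain ⟨y, hy_le, hy_ge, hAy⟩ :=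
    asq_iff_forall_finset.1 hX A (fun x hx => by simpa using hA hx) η hη_pos
  have hTy : ↑T ⊆ ball (-σ y) (1 + ε) := by
    refine hTA.trans ((thickening_subset_of_subset _
      (convexHull_image_subset_closedBall hnorm haddition hAy)).trans ?_)
    rw [thickening_closedBall (half_pos hε) (by positivity)]
    exact ball_subset_ball (by nlinarith)
  refine ⟨y, ?_, ?_, fun z hz => ?_⟩
  · rw [hnorm]; nlinarith [norm_nonneg y]
  · rw [hnorm]; nlinarith [norm_nonneg y]
  · simpa using (mem_ball_iff_norm.1 (hTy hz)).le

end SquareMap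

/-- `Z` together with `σ x = x ⊗ x` models `⊗̂_{π,s,2} X`. -/
theorem stmt4_general {X Z : Type*} [NormedAddCommGroup X] [NormedSpace ℝ X]
    [NormedAddCommGroup Z] [NormedSpace ℝ Z]
    (σ : X → Z)
    (hnorm : ∀ x, ‖σ x‖ = ‖x‖ ^ 2)
    (haddition : ∀ x y : X, σ (x + y) + σ (x - y) = (2 : ℝ) • (σ x + σ y))
    (hball : closure (convexHull ℝ {z : Z | ∃ x : X, ‖x‖ = 1 ∧ z = σ x}) =
      closedBall (0 : Z) 1)
    (hX : ASQ X) : ASQ Z := by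
  classical
  have hS : {z : Z | ∃ x : X, ‖x‖ = 1 ∧ z = σ x} = σ '' sphere 0 1 := by
    ext z; simp [eq_comm]
  rw [hS] at hball
  refine asq_iff_forall_finset.2 fun s hs ε hε => ?_
  have hT : ↑(s ∪ s.image Neg.neg) ⊆ closure (convexHull ℝ (σ '' sphere 0 1)) := by
    intro z hz
    rw [Finset.coe_union, Finset.coe_image, Set.mem_union, Set.mem_image] at hz
    rw [hball, mem_closedBall_zero_iff]
    obtain hz | ⟨z, hz, rfl⟩ := hz
    exacts [(hs z hz).le, (norm_neg z ▸ hs z hz).le]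
  obtain ⟨y, hy_le, hy_ge, hTy⟩ := exists_forall_norm_add_sq_le hnorm haddition hX hT hε
  refine ⟨σ y, hy_le, hy_ge, fun z hz => ⟨hTy z (Finset.mem_union_left _ hz), ?_⟩⟩
  have := hTy (-z) (Finset.mem_union_right _ (Finset.mem_image_of_mem _ hz))
  rwa [neg_add_eq_sub, norm_sub_rev] at this

/-- If `X` is an ASQ Banach space then the 2-fold projective symmetric tensor product
`⊗̂_{π,s,2} X` is ASQ. The space `⊗̂_{π,s,2} X` is here a Banach space `Z` together with
the square map `σ : x ↦ x ⊗ x`, satisfying `‖σ x‖ = ‖x‖²`, homogeneity of degree 2,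
the addition formula `σ(x+y) + σ(x−y) = 2(σ x + σ y)`, and whose closed unit ball is the
closed convex hull of the squares of unit vectors. -/
theorem stmt4 {X Z : Type*} [NormedAddCommGroup X] [NormedSpace ℝ X] [CompleteSpace X]
    [NormedAddCommGroup Z] [NormedSpace ℝ Z] [CompleteSpace Z]
    (σ : X → Z)
    (hnorm : ∀ x, ‖σ x‖ = ‖x‖ ^ 2)
    (hsmul : ∀ (c : ℝ) (x : X), σ (c • x) = (c ^ 2) • σ x)
    (haddition : ∀ x y : X, σ (x + y) + σ (x - y) = (2 : ℝ) • (σ x + σ y))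
    (hball : closure (convexHull ℝ {z : Z | ∃ x : X, ‖x‖ = 1 ∧ z = σ x}) =
      closedBall (0 : Z) 1)
    (hX : ASQ X) : ASQ Z :=
  stmt4_general σ hnorm haddition hball hX
end

section
/- Let X be a Banach space. If a sequence (xₙ) in X is equivalent to the canonical basis of c₀, then for every N ≥ 1 and every continuous N-homogeneous polynomial P on X, P(xₙ) → 0. -/
open Filter Topology

/-- A sequence in a Banach space is equivalent to the canonical basis of `c₀` if there are
constants `0 < a ≤ b` with `a·max|λᵢ| ≤ ‖Σ λᵢ xᵢ‖ ≤ b·max|λᵢ|` for all finite families. -/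
def IsEquivC0Basis {X : Type*} [NormedAddCommGroup X] [NormedSpace ℝ X] (x : ℕ → X) : Prop :=
  ∃ a b : ℝ, 0 < a ∧ a ≤ b ∧ ∀ (n : ℕ) (l : Fin n → ℝ),
    a * (⨆ i, |l i|) ≤ ‖∑ i, l i • x (i : ℕ)‖ ∧
    ‖∑ i, l i • x (i : ℕ)‖ ≤ b * (⨆ i, |l i|)


open Finset in
-- orthogonality: constant case
lemma orth_const' {m N : ℕ} {ω : ℂ} (hω : ω ^ N = 1) (i : Fin m) :
    (∑ r : Fin m → Fin N, ∏ _j : Fin N, ω ^ ((r i : ℕ))) = (N : ℂ) ^ m := by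
  have h1 : ∀ r : Fin m → Fin N, (∏ _j : Fin N, ω ^ ((r i : ℕ))) = 1 := by
    intro r
    rw [Finset.prod_const, Finset.card_univ, Fintype.card_fin, ← pow_mul, mul_comm, pow_mul, hω,
      one_pow]
  rw [Finset.sum_congr rfl (fun r _ => h1 r), Finset.sum_const, Finset.card_univ, Fintype.card_fun,
    Fintype.card_fin, Fintype.card_fin]
  simp

open Finset in
lemma orth_zero {m N : ℕ} (hN : 1 ≤ N) {ω : ℂ} (hω : IsPrimitiveRoot ω N)
    (k : Fin N → Fin m) (hk : ¬ ∃ i, ∀ j, k j = i) :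
    (∑ r : Fin m → Fin N, ∏ j : Fin N, ω ^ ((r (k j) : ℕ))) = 0 := by
  classical
  -- rewrite each product fiberwise
  have hre : ∀ r : Fin m → Fin N, (∏ j : Fin N, ω ^ ((r (k j) : ℕ)))
      = ∏ i : Fin m, (ω ^ ((univ.filter (fun j => k j = i)).card)) ^ ((r i : ℕ)) := by
    intro r
    rw [← Finset.prod_fiberwise' univ k (fun i => ω ^ ((r i : ℕ)))]
    refine Finset.prod_congr rfl fun i _ => ?_
    rw [Finset.prod_const, ← pow_mul, ← pow_mul, mul_comm]
  rw [Finset.sum_congr rfl (fun r _ => hre r)]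
  have : (∑ r : Fin m → Fin N, ∏ i : Fin m,
      (ω ^ ((univ.filter (fun j => k j = i)).card)) ^ ((r i : ℕ)))
      = ∏ i : Fin m, ∑ t : Fin N, (ω ^ ((univ.filter (fun j => k j = i)).card)) ^ ((t : ℕ)) := by
    rw [Finset.prod_univ_sum]
    rw [← Fintype.piFinset_univ]
  rw [this]
  -- find an index with 0 < d < N
  have hNpos : 0 < N := hN
  set j0 : Fin N := ⟨0, hNpos⟩
  set i0 : Fin m := k j0
  set d : ℕ := (univ.filter (fun j => k j = i0)).card with hd
  have hd1 : 0 < d := Finset.card_pos.2 ⟨j0, by simp [i0]⟩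
  have hdN : d < N := by
    rcases lt_or_eq_of_le (le_trans (Finset.card_filter_le univ (fun j => k j = i0)) (by simp : (univ : Finset (Fin N)).card ≤ N)) with h | h
    · exact h
    · exfalso
      apply hk
      refine ⟨i0, fun j => ?_⟩
      have huniv : (univ.filter (fun j => k j = i0)) = univ := by
        apply Finset.eq_univ_of_card
        rw [h, Fintype.card_fin]
      have hj : j ∈ univ.filter (fun j => k j = i0) := by
        rw [huniv]; exact Finset.mem_univ j
      exact (Finset.mem_filter.1 hj).2
  apply Finset.prod_eq_zero (Finset.mem_univ i0)
  have hne : ω ^ d ≠ 1 := hω.pow_ne_one_of_pos_of_lt hd1.ne' hdN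
  have hsum : (∑ t : Fin N, (ω ^ d) ^ ((t : ℕ))) = ∑ t ∈ Finset.range N, (ω ^ d) ^ t :=
    Fin.sum_univ_eq_sum_range _ _
  rw [hsum, geom_sum_eq hne, ← pow_mul, mul_comm, pow_mul, hω.pow_eq_one, one_pow,
    sub_self, zero_div]

open Finset in
lemma key_identity {m N : ℕ} (hN : 1 ≤ N) {ω : ℂ} (hω : IsPrimitiveRoot ω N)
    (z : Fin m → ℂ) (c : (Fin N → Fin m) → ℂ) :
    (∑ r : Fin m → Fin N, ∑ k : Fin N → Fin m,
        (∏ j : Fin N, (z (k j) * ω ^ ((r (k j) : ℕ)))) * c k)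
      = (N : ℂ) ^ m * ∑ i : Fin m, z i ^ N * c (fun _ => i) := by
  classical
  rw [Finset.sum_comm]
  have hterm : ∀ k : Fin N → Fin m,
      (∑ r : Fin m → Fin N, (∏ j : Fin N, (z (k j) * ω ^ ((r (k j) : ℕ)))) * c k)
      = ((∏ j : Fin N, z (k j)) * c k) *
          (∑ r : Fin m → Fin N, ∏ j : Fin N, ω ^ ((r (k j) : ℕ))) := by
    intro k
    rw [Finset.mul_sum]
    refine Finset.sum_congr rfl fun r _ => ?_
    rw [Finset.prod_mul_distrib]; ring
  rw [Finset.sum_congr rfl (fun k _ => hterm k)]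
  -- the constant functions
  have hinj : Function.Injective (fun i : Fin m => (fun _ : Fin N => i)) := by
    intro i1 i2 h
    exact congrFun h ⟨0, hN⟩
  have hrestrict : (∑ k : Fin N → Fin m, ((∏ j : Fin N, z (k j)) * c k) *
          (∑ r : Fin m → Fin N, ∏ j : Fin N, ω ^ ((r (k j) : ℕ))))
      = ∑ k ∈ Finset.image (fun i : Fin m => (fun _ : Fin N => i)) univ,
          ((∏ j : Fin N, z (k j)) * c k) *
          (∑ r : Fin m → Fin N, ∏ j : Fin N, ω ^ ((r (k j) : ℕ))) := by
    refine (Finset.sum_subset (Finset.subset_univ _) fun k _ hk => ?_).symm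
    have hnc : ¬ ∃ i, ∀ j, k j = i := by
      intro ⟨i, hi⟩
      exact hk (Finset.mem_image.2 ⟨i, Finset.mem_univ i, by funext j; exact (hi j).symm⟩)
    rw [orth_zero hN hω k hnc, mul_zero]
  rw [hrestrict, Finset.sum_image (fun a _ b _ h => hinj h)]
  rw [Finset.mul_sum]
  refine Finset.sum_congr rfl fun i _ => ?_
  rw [orth_const' hω.pow_eq_one i, Finset.prod_const, Finset.card_univ, Fintype.card_fin]
  ring

section AuxMulti
open Finset
variable {X : Type*} [NormedAddCommGroup X] [NormedSpace ℝ X]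

lemma expand_multilinear {N m : ℕ} (A : ContinuousMultilinearMap ℝ (fun _ : Fin N => X) ℝ)
    (x : ℕ → X) (w : Fin N → Fin m → ℝ) :
    A (fun j => ∑ i : Fin m, w j i • x (i : ℕ))
      = ∑ k : Fin N → Fin m, (∏ j : Fin N, w j (k j)) * A (fun j => x ((k j : ℕ))) := by
  classical
  rw [A.map_sum (g := fun j i => w j i • x (i : ℕ))]
  refine Finset.sum_congr rfl fun k _ => ?_
  have := A.map_smul_univ (fun j => w j (k j)) (fun j => x ((k j : ℕ)))
  simpa [smul_eq_mul] using this

lemma G_bound {N m : ℕ} (A : ContinuousMultilinearMap ℝ (fun _ : Fin N => X) ℝ)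
    (x : ℕ → X) (b : ℝ) (hb : 0 ≤ b)
    (hub : ∀ (l : Fin m → ℝ), (∀ i, |l i| ≤ 1) → ‖∑ i, l i • x (i : ℕ)‖ ≤ b)
    (ζ : Fin m → ℂ) (hζ : ∀ i, ‖ζ i‖ ≤ 1) :
    ‖∑ k : Fin N → Fin m,
        (∏ j : Fin N, ζ (k j)) * ((A (fun j => x ((k j : ℕ))) : ℝ) : ℂ)‖
      ≤ 2 ^ N * ‖A‖ * b ^ N := by
  classical
  -- decompose each ζ into real and imaginary parts
  have hz : ∀ i, ζ i = ((ζ i).re : ℂ) + ((ζ i).im : ℂ) * Complex.I := fun i =>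
    (Complex.re_add_im (ζ i)).symm
  -- expand the product
  have hprod : ∀ k : Fin N → Fin m, (∏ j : Fin N, ζ (k j))
      = ∑ t ∈ (univ : Finset (Fin N)).powerset,
          ((∏ j ∈ t, ((ζ (k j)).re : ℂ)) * ∏ j ∈ univ \ t, ((ζ (k j)).im : ℂ)) *
            Complex.I ^ (univ \ t).card := by
    intro k
    calc (∏ j : Fin N, ζ (k j))
        = ∏ j : Fin N, (((ζ (k j)).re : ℂ) + ((ζ (k j)).im : ℂ) * Complex.I) :=
          Finset.prod_congr rfl fun j _ => by rw [← hz]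
      _ = ∑ t ∈ (univ : Finset (Fin N)).powerset,
            (∏ j ∈ t, ((ζ (k j)).re : ℂ)) * ∏ j ∈ univ \ t, (((ζ (k j)).im : ℂ) * Complex.I) :=
          Finset.prod_add _ _ _
      _ = _ := by
          refine Finset.sum_congr rfl fun t _ => ?_
          rw [Finset.prod_mul_distrib, Finset.prod_const]
          ring
  -- swap sums
  have hswap : (∑ k : Fin N → Fin m,
        (∏ j : Fin N, ζ (k j)) * ((A (fun j => x ((k j : ℕ))) : ℝ) : ℂ))
      = ∑ t ∈ (univ : Finset (Fin N)).powerset, Complex.I ^ (univ \ t).card *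
          ∑ k : Fin N → Fin m,
            ((∏ j ∈ t, ((ζ (k j)).re : ℂ)) * ∏ j ∈ univ \ t, ((ζ (k j)).im : ℂ)) *
              ((A (fun j => x ((k j : ℕ))) : ℝ) : ℂ) := by
    rw [Finset.sum_congr rfl (fun k _ => by rw [hprod k, Finset.sum_mul]), Finset.sum_comm]
    refine Finset.sum_congr rfl fun t _ => ?_
    rw [Finset.mul_sum]
    refine Finset.sum_congr rfl fun k _ => by ring
  rw [hswap]
  -- bound each summand
  have hbnd : ∀ t ∈ (univ : Finset (Fin N)).powerset,
      ‖Complex.I ^ (univ \ t).card *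
          ∑ k : Fin N → Fin m,
            ((∏ j ∈ t, ((ζ (k j)).re : ℂ)) * ∏ j ∈ univ \ t, ((ζ (k j)).im : ℂ)) *
              ((A (fun j => x ((k j : ℕ))) : ℝ) : ℂ)‖ ≤ ‖A‖ * b ^ N := by
    intro t _
    set w : Fin N → Fin m → ℝ := fun j i => if j ∈ t then (ζ i).re else (ζ i).im with hw
    have hsum : (∑ k : Fin N → Fin m,
            ((∏ j ∈ t, ((ζ (k j)).re : ℂ)) * ∏ j ∈ univ \ t, ((ζ (k j)).im : ℂ)) *
              ((A (fun j => x ((k j : ℕ))) : ℝ) : ℂ))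
        = ((A (fun j => ∑ i : Fin m, w j i • x (i : ℕ)) : ℝ) : ℂ) := by
      rw [expand_multilinear A x w]
      push_cast
      refine (Finset.sum_congr rfl fun k _ => ?_).symm
      have hsplit : (∏ j : Fin N, (w j (k j) : ℂ))
          = (∏ j ∈ t, ((ζ (k j)).re : ℂ)) * ∏ j ∈ univ \ t, ((ζ (k j)).im : ℂ) := by
        rw [← Finset.prod_mul_prod_compl t (fun j => ((w j (k j) : ℝ) : ℂ))]
        rw [Finset.compl_eq_univ_sdiff]
        congr 1
        · exact Finset.prod_congr rfl fun j hj => by simp [hw, hj]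
        · refine Finset.prod_congr rfl fun j hj => ?_
          have : j ∉ t := (Finset.mem_sdiff.1 hj).2
          simp [hw, this]
      rw [← hsplit]
    rw [hsum]
    rw [norm_mul, norm_pow, Complex.norm_I, one_pow, one_mul, Complex.norm_real, Real.norm_eq_abs]
    have hnorm : ‖A (fun j => ∑ i : Fin m, w j i • x (i : ℕ))‖
        ≤ ‖A‖ * ∏ _j : Fin N, b := by
      refine le_trans (A.le_opNorm _) ?_
      refine mul_le_mul_of_nonneg_left ?_ (norm_nonneg A)
      refine Finset.prod_le_prod (fun j _ => norm_nonneg _) fun j _ => ?_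
      refine hub _ fun i => ?_
      by_cases hj : j ∈ t <;>
        simp only [hw, hj, if_true, if_false] <;>
        [exact le_trans (Complex.abs_re_le_norm _) (hζ i);
         exact le_trans (Complex.abs_im_le_norm _) (hζ i)]
    calc |A (fun j => ∑ i : Fin m, w j i • x (i : ℕ))|
        ≤ ‖A‖ * ∏ _j : Fin N, b := hnorm
      _ = ‖A‖ * b ^ N := by rw [Finset.prod_const, Finset.card_univ, Fintype.card_fin]
  calc ‖_‖ ≤ ∑ t ∈ (univ : Finset (Fin N)).powerset, ‖A‖ * b ^ N := by
        refine le_trans (norm_sum_le _ _) ?_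
        exact Finset.sum_le_sum hbnd
    _ = 2 ^ N * ‖A‖ * b ^ N := by
        rw [Finset.sum_const, Finset.card_powerset, Finset.card_univ, Fintype.card_fin]
        simp [mul_assoc]

end AuxMulti

/-- If `(xₙ)` is equivalent to the `c₀` basis then `P(xₙ) → 0` for every continuous
`N`-homogeneous polynomial `P` (given by a continuous symmetric `N`-linear form `A`). -/
theorem stmt6 {X : Type*} [NormedAddCommGroup X] [NormedSpace ℝ X] [CompleteSpace X]
    (x : ℕ → X) (hx : IsEquivC0Basis x) (N : ℕ) (hN : 1 ≤ N)
    (A : ContinuousMultilinearMap ℝ (fun _ : Fin N => X) ℝ)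
    (hsymm : ∀ (σ : Equiv.Perm (Fin N)) (v : Fin N → X), A (v ∘ σ) = A v) :
    Tendsto (fun n => A (fun _ => x n)) atTop (𝓝 0) := by
  classical
  obtain ⟨a, b, ha, hab, hx⟩ := hx
  have hb : 0 ≤ b := le_trans ha.le hab
  -- uniform norm bound for coefficients bounded by 1
  have hub : ∀ (m : ℕ) (l : Fin m → ℝ), (∀ i, |l i| ≤ 1) →
      ‖∑ i, l i • x (i : ℕ)‖ ≤ b := by
    intro m l hl
    refine le_trans (hx m l).2 ?_
    rcases isEmpty_or_nonempty (Fin m) with h | h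
    · simp [Real.iSup_of_isEmpty, hb]
    · have : (⨆ i, |l i|) ≤ 1 := ciSup_le hl
      calc b * (⨆ i, |l i|) ≤ b * 1 := mul_le_mul_of_nonneg_left this hb
        _ = b := mul_one b
  set C : ℝ := 2 ^ N * ‖A‖ * b ^ N with hC
  have hC0 : 0 ≤ C := by positivity
  -- the key finite-set bound
  have key : ∀ T : Finset ℕ, |∑ n ∈ T, A (fun _ => x n)| ≤ C := by
    intro T
    set m : ℕ := T.sup id + 1 with hm
    have hT : ∀ n ∈ T, n < m := fun n hn => Nat.lt_succ_of_le (Finset.le_sup (f := id) hn)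
    set ω : ℂ := Complex.exp (2 * ↑Real.pi * Complex.I / N) with hωdef
    have hω : IsPrimitiveRoot ω N := Complex.isPrimitiveRoot_exp N (Nat.one_le_iff_ne_zero.mp hN)
    have hωabs : ‖ω‖ = 1 := by
      have h1 : ‖ω‖ ^ N = 1 := by rw [← norm_pow, hω.pow_eq_one, norm_one]
      rcases lt_trichotomy ‖ω‖ 1 with h | h | h
      · exfalso
        have := pow_lt_one₀ (norm_nonneg _) h (n := N) (Nat.one_le_iff_ne_zero.mp hN)
        rw [h1] at this; exact lt_irrefl 1 this
      · exact h
      · exfalso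
        have := one_lt_pow₀ h (Nat.one_le_iff_ne_zero.mp hN)
        rw [h1] at this; exact lt_irrefl 1 this
    set z : Fin m → ℂ := fun i => if (i : ℕ) ∈ T then 1 else 0 with hz
    set c : (Fin N → Fin m) → ℂ := fun k => ((A (fun j => x ((k j : ℕ))) : ℝ) : ℂ) with hc
    have hid := key_identity hN hω z c
    -- right-hand side equals the diagonal sum
    have hdiag : (∑ i : Fin m, z i ^ N * c (fun _ => i))
        = ((∑ n ∈ T, A (fun _ => x n) : ℝ) : ℂ) := by
      have h1 : ∀ i : Fin m, z i ^ N * c (fun _ => i)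
          = if (i : ℕ) ∈ T then ((A (fun _ => x (i : ℕ)) : ℝ) : ℂ) else 0 := by
        intro i
        by_cases hi : (i : ℕ) ∈ T <;> simp [hz, hc, hi, zero_pow (by omega : N ≠ 0)]
      rw [Finset.sum_congr rfl fun i _ => h1 i]
      rw [Fin.sum_univ_eq_sum_range (fun n => if n ∈ T then ((A (fun _ => x n) : ℝ) : ℂ) else 0) m]
      rw [Finset.sum_ite_mem]
      have : Finset.range m ∩ T = T :=
        Finset.inter_eq_right.2 (fun n hn => Finset.mem_range.2 (hT n hn))
      rw [this]
      push_cast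
      rfl
    -- bound the left-hand side
    have hG : ∀ r : Fin m → Fin N,
        ‖∑ k : Fin N → Fin m,
          (∏ j : Fin N, (z (k j) * ω ^ ((r (k j) : ℕ)))) * c k‖ ≤ C := by
      intro r
      have := G_bound A x b hb (hub m) (fun i => z i * ω ^ ((r i : ℕ))) ?_
      · exact this
      · intro i
        rw [norm_mul, norm_pow, hωabs, one_pow, mul_one]
        by_cases hi : (i : ℕ) ∈ T <;> simp [hz, hi]
    have hLHS : ‖(N : ℂ) ^ m * ((∑ n ∈ T, A (fun _ => x n) : ℝ) : ℂ)‖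
        ≤ (N : ℝ) ^ m * C := by
      rw [← hdiag, ← hid]
      refine le_trans (norm_sum_le _ _) ?_
      calc (∑ r : Fin m → Fin N, ‖∑ k : Fin N → Fin m,
              (∏ j : Fin N, (z (k j) * ω ^ ((r (k j) : ℕ)))) * c k‖)
          ≤ ∑ _r : Fin m → Fin N, C := Finset.sum_le_sum fun r _ => hG r
        _ = (N : ℝ) ^ m * C := by
            rw [Finset.sum_const, Finset.card_univ, Fintype.card_fun, Fintype.card_fin,
              Fintype.card_fin, nsmul_eq_mul]
            push_cast
            ring
    have hNpow : (0 : ℝ) < (N : ℝ) ^ m := by positivity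
    rw [norm_mul, norm_pow, Complex.norm_natCast, Complex.norm_real, Real.norm_eq_abs] at hLHS
    exact le_of_mul_le_mul_left hLHS hNpow
  -- from the finite-set bound, absolute summability
  have habs : ∀ T : Finset ℕ, (∑ n ∈ T, |A (fun _ => x n)|) ≤ 2 * C := by
    intro T
    rw [← Finset.sum_filter_add_sum_filter_not T (fun n => 0 ≤ A (fun _ => x n))]
    have h1 : (∑ n ∈ T.filter (fun n => 0 ≤ A (fun _ => x n)), |A (fun _ => x n)|) ≤ C := by
      refine le_trans (le_of_eq (Finset.sum_congr rfl fun n hn =>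
        abs_of_nonneg (Finset.mem_filter.1 hn).2)) ?_
      exact le_trans (le_abs_self _) (key _)
    have h2 : (∑ n ∈ T.filter (fun n => ¬ 0 ≤ A (fun _ => x n)), |A (fun _ => x n)|) ≤ C := by
      have : (∑ n ∈ T.filter (fun n => ¬ 0 ≤ A (fun _ => x n)), |A (fun _ => x n)|)
          = -∑ n ∈ T.filter (fun n => ¬ 0 ≤ A (fun _ => x n)), A (fun _ => x n) := by
        rw [← Finset.sum_neg_distrib]
        exact Finset.sum_congr rfl fun n hn =>
          abs_of_neg (lt_of_not_ge (Finset.mem_filter.1 hn).2)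
      rw [this]
      exact le_trans (neg_le_abs _) (key _)
    linarith
  have hsummable : Summable (fun n => |A (fun _ => x n)|) :=
    summable_of_sum_le (fun n => abs_nonneg _) habs
  have htend : Tendsto (fun n => |A (fun _ => x n)|) atTop (𝓝 0) :=
    hsummable.tendsto_atTop_zero
  exact squeeze_zero_norm (fun n => le_of_eq rfl) htend
end

section
/- Let M be a pointed metric space and let (fₙ) be a sequence of norm-one functions in Lip₀(M). For each n let Uₙ := {x ∈ M : fₙ(x) ≠ 0}, and suppose that for every n there is a point xₙ ∉ ⋃ₖ Uₖ such that d(y, xₙ) < d(y, x) for every y ∈ Uₙ and every x ∈ ⋃_{k≠n} Uₖ. Then (fₙ) is equivalent to the canonical basis of c₀; more precisely, for all scalars λ₁, …, λ_N, max_{1≤i≤N}|λᵢ| ≤ ‖Σᵢ λᵢ fᵢ‖ ≤ 2·max_{1≤i≤N}|λᵢ|. -/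
/-!
The supports of the `fₙ` are pairwise disjoint, so at every point the sum `g = ∑ λᵢ fᵢ` reduces to
at most one term. For the upper bound, if `p` and `q` lie in different supports then `fᵢ q = 0` for
the index `i` of `p`, so `|g p| = |λᵢ| |fᵢ p - fᵢ q| ≤ max |λ| · d(p, q)`, and likewise for `q`.
For the lower bound, a quotient `|fᵢ p - fᵢ q| / d(p, q)` with `p` in the support of `fᵢ` is
reproduced by `g` up to the factor `|λᵢ|`: directly if `q` lies in no other support, and otherwise
with `q` replaced by the point `xᵢ`, where `g` vanishes and which is closer to `p` than `q` is.
-/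

noncomputable def lipNorm {M : Type*} [MetricSpace M] (f : M → ℝ) : ℝ :=
  sSup {r : ℝ | ∃ x y : M, x ≠ y ∧ r = |f x - f y| / dist x y}

open Function

section LipNorm

variable {M : Type*} [MetricSpace M] {f g : M → ℝ}

def lipRatios (f : M → ℝ) : Set ℝ :=
  {r : ℝ | ∃ x y : M, x ≠ y ∧ r = |f x - f y| / dist x y}

theorem lipNorm_nonneg (f : M → ℝ) : 0 ≤ lipNorm f :=
  Real.sSup_nonneg fun _ ⟨_, _, _, hr⟩ => hr ▸ div_nonneg (abs_nonneg _) dist_nonneg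

theorem lipNorm_le {K : ℝ} (hK : 0 ≤ K) (hf : ∀ p q, |f p - f q| ≤ K * dist p q) :
    lipNorm f ≤ K :=
  Real.sSup_le (by rintro _ ⟨p, q, -, rfl⟩; exact div_le_of_le_mul₀ dist_nonneg hK (hf p q)) hK

theorem bddAbove_lipRatios {K : ℝ} (hf : ∀ p q, |f p - f q| ≤ K * dist p q) :
    BddAbove (lipRatios f) :=
  ⟨K, by rintro _ ⟨p, q, hpq, rfl⟩; exact (div_le_iff₀ (dist_pos.2 hpq)).2 (hf p q)⟩

/-- `lipNorm f` takes the junk value `0` when `f` is not Lipschitz. -/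
theorem bddAbove_lipRatios_of_lipNorm_ne_zero (h : lipNorm f ≠ 0) : BddAbove (lipRatios f) := by
  by_contra hb
  exact h (Real.sSup_of_not_bddAbove hb)

theorem div_le_lipNorm (hf : BddAbove (lipRatios f)) {p q : M} (hpq : p ≠ q) :
    |f p - f q| / dist p q ≤ lipNorm f :=
  le_csSup hf ⟨p, q, hpq, rfl⟩

theorem abs_sub_le_lipNorm_mul_dist (hf : BddAbove (lipRatios f)) (p q : M) :
    |f p - f q| ≤ lipNorm f * dist p q := by
  rcases eq_or_ne p q with rfl | hpq
  · simp
  · exact (div_le_iff₀ (dist_pos.2 hpq)).1 (div_le_lipNorm hf hpq)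

theorem mul_lipNorm_le {c : ℝ} (hc : 0 ≤ c)
    (h : ∀ p q, p ≠ q → c * (|f p - f q| / dist p q) ≤ lipNorm g) :
    c * lipNorm f ≤ lipNorm g := by
  rcases hc.eq_or_lt with rfl | hc
  · simpa using lipNorm_nonneg g
  rw [← le_div_iff₀' hc]
  refine Real.sSup_le ?_ (div_nonneg (lipNorm_nonneg g) hc.le)
  rintro _ ⟨p, q, hpq, rfl⟩
  exact (le_div_iff₀' hc).2 (h p q hpq)

theorem abs_mul_sub_mul_le {c m : ℝ} (hf : ∀ p q, |f p - f q| ≤ dist p q) (hm0 : 0 ≤ m)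
    (hc : |c| ≤ m) (p q : M) : |c * f p - c * f q| ≤ m * dist p q := by
  rw [← mul_sub, abs_mul]
  exact mul_le_mul hc (hf p q) (abs_nonneg _) hm0

end LipNorm

section DisjointSupports

variable {M ι : Type*} {F : ι → M → ℝ} (l : ι → ℝ)

theorem apply_eq_zero_of_pairwise_disjoint (hdisj : Pairwise (Disjoint on fun i => support (F i)))
    {i j : ι} (hij : i ≠ j) {p : M} (hp : F i p ≠ 0) : F j p = 0 :=
  notMem_support.1 (Set.disjoint_left.1 (hdisj hij) (mem_support.2 hp))

variable [Fintype ι]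

theorem sum_mul_apply_eq_of_forall_ne {i : ι} {p : M} (h : ∀ j, j ≠ i → F j p = 0) :
    ∑ j, l j * F j p = l i * F i p :=
  Finset.sum_eq_single_of_mem i (Finset.mem_univ i) fun j _ hji => by rw [h j hji, mul_zero]

theorem sum_mul_apply_eq_single (hdisj : Pairwise (Disjoint on fun i => support (F i)))
    {i : ι} {p : M} (hp : F i p ≠ 0) : ∑ j, l j * F j p = l i * F i p :=
  sum_mul_apply_eq_of_forall_ne l fun _ hji => apply_eq_zero_of_pairwise_disjoint hdisj hji.symm hp

variable [MetricSpace M] {m : ℝ}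

theorem abs_sum_mul_apply_le (hdisj : Pairwise (Disjoint on fun i => support (F i)))
    (hF : ∀ i p q, |F i p - F i q| ≤ dist p q) (hm0 : 0 ≤ m) (hm : ∀ i, |l i| ≤ m)
    {p q : M} (hq : ∀ i, F i p ≠ 0 → F i q = 0) :
    |∑ i, l i * F i p| ≤ m * dist p q := by
  by_cases hp : ∃ i, F i p ≠ 0
  · obtain ⟨i, hi⟩ := hp
    rw [sum_mul_apply_eq_single l hdisj hi]
    simpa [hq i hi] using abs_mul_sub_mul_le (hF i) hm0 (hm i) p q
  · push Not at hp
    simpa [hp] using mul_nonneg hm0 dist_nonneg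

theorem abs_sum_mul_sub_le (hdisj : Pairwise (Disjoint on fun i => support (F i)))
    (hF : ∀ i p q, |F i p - F i q| ≤ dist p q) (hm0 : 0 ≤ m) (hm : ∀ i, |l i| ≤ m) (p q : M) :
    |∑ i, l i * F i p - ∑ i, l i * F i q| ≤ 2 * m * dist p q := by
  by_cases hpq : ∃ i, F i p ≠ 0 ∧ F i q ≠ 0
  · obtain ⟨i, hp, hq⟩ := hpq
    rw [sum_mul_apply_eq_single l hdisj hp, sum_mul_apply_eq_single l hdisj hq]
    have := abs_mul_sub_mul_le (hF i) hm0 (hm i) p q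
    linarith [mul_nonneg hm0 (dist_nonneg (x := p) (y := q))]
  · push Not at hpq
    have hqp : ∀ i, F i q ≠ 0 → F i p = 0 := fun i hq => not_not.1 fun hp => hq (hpq i hp)
    calc _ ≤ |∑ i, l i * F i p| + |∑ i, l i * F i q| := abs_sub _ _
      _ ≤ m * dist p q + m * dist q p :=
        add_le_add (abs_sum_mul_apply_le l hdisj hF hm0 hm hpq)
          (abs_sum_mul_apply_le l hdisj hF hm0 hm hqp)
      _ = 2 * m * dist p q := by rw [dist_comm q p]; ring

theorem abs_mul_div_le_lipNorm_sum (hdisj : Pairwise (Disjoint on fun i => support (F i)))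
    (hg : BddAbove (lipRatios fun p => ∑ i, l i * F i p)) {x : ι → M} (hx : ∀ i j, F j (x i) = 0)
    (hsep : ∀ i, ∀ y, F i y ≠ 0 → ∀ j, j ≠ i → ∀ q, F j q ≠ 0 → dist y (x i) < dist y q)
    {i : ι} {p q : M} (hpq : p ≠ q) (hp : F i p ≠ 0) :
    |l i| * (|F i p - F i q| / dist p q) ≤ lipNorm fun p => ∑ i, l i * F i p := by
  have hgp := sum_mul_apply_eq_single l hdisj hp
  by_cases hq : ∃ j, j ≠ i ∧ F j q ≠ 0
  · obtain ⟨j, hji, hj⟩ := hq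
    have hpx : p ≠ x i := fun h => hp (h ▸ hx i i)
    have hgx : ∑ j, l j * F j (x i) = 0 := by simp [hx i]
    calc |l i| * (|F i p - F i q| / dist p q)
        = |l i * F i p - 0| / dist p q := by
          rw [apply_eq_zero_of_pairwise_disjoint hdisj hji hj, sub_zero, sub_zero, abs_mul,
            mul_div_assoc]
      _ ≤ |l i * F i p - 0| / dist p (x i) :=
        div_le_div_of_nonneg_left (abs_nonneg _) (dist_pos.2 hpx) (hsep i p hp j hji q hj).le
      _ ≤ _ := by
        rw [← hgp, ← hgx]
        exact div_le_lipNorm hg hpx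
  · push Not at hq
    have hgq := sum_mul_apply_eq_of_forall_ne l hq
    calc |l i| * (|F i p - F i q| / dist p q)
        = |∑ j, l j * F j p - ∑ j, l j * F j q| / dist p q := by
          rw [hgp, hgq, ← mul_sub, abs_mul, mul_div_assoc]
      _ ≤ _ := div_le_lipNorm hg hpq

theorem abs_mul_lipNorm_le_lipNorm_sum (hdisj : Pairwise (Disjoint on fun i => support (F i)))
    (hg : BddAbove (lipRatios fun p => ∑ i, l i * F i p)) {x : ι → M} (hx : ∀ i j, F j (x i) = 0)
    (hsep : ∀ i, ∀ y, F i y ≠ 0 → ∀ j, j ≠ i → ∀ q, F j q ≠ 0 → dist y (x i) < dist y q)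
    (i : ι) : |l i| * lipNorm (F i) ≤ lipNorm fun p => ∑ i, l i * F i p := by
  refine mul_lipNorm_le (abs_nonneg _) fun p q hpq => ?_
  by_cases hp : F i p ≠ 0
  · exact abs_mul_div_le_lipNorm_sum l hdisj hg hx hsep hpq hp
  by_cases hq : F i q ≠ 0
  · rw [abs_sub_comm, dist_comm]
    exact abs_mul_div_le_lipNorm_sum l hdisj hg hx hsep hpq.symm hq
  push Not at hp hq
  simpa [hp, hq] using lipNorm_nonneg _

end DisjointSupports

theorem stmt7_general {M : Type*} [MetricSpace M]
    (f : ℕ → M → ℝ)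
    (hnorm : ∀ n, lipNorm (f n) = 1)
    (x : ℕ → M)
    (hx : ∀ n, x n ∉ ⋃ k : ℕ, {p : M | f k p ≠ 0})
    (hsep : ∀ n, ∀ y ∈ {p : M | f n p ≠ 0},
      ∀ k : ℕ, k ≠ n → ∀ q ∈ {p : M | f k p ≠ 0}, dist y (x n) < dist y q) :
    ∀ (N : ℕ) (l : Fin N → ℝ),
      (⨆ i, |l i|) ≤ lipNorm (fun p => ∑ i, l i * f (i : ℕ) p) ∧
      lipNorm (fun p => ∑ i, l i * f (i : ℕ) p) ≤ 2 * (⨆ i, |l i|) := by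
  have hdisj : Pairwise (Disjoint on fun n => support (f n)) := fun n k hnk =>
    Set.disjoint_left.2 fun p hp hq => (hsep n p hp k hnk.symm p hq).not_ge (by simp)
  have hF : ∀ n p q, |f n p - f n q| ≤ dist p q := fun n p q => by
    simpa [hnorm n] using abs_sub_le_lipNorm_mul_dist
      (bddAbove_lipRatios_of_lipNorm_ne_zero (f := f n) (by simp [hnorm n])) p q
  have hxz : ∀ n k, f k (x n) = 0 := by simpa using hx
  intro N l
  have hdisjN : Pairwise (Disjoint on fun i : Fin N => support (f i)) :=
    fun i j hij => hdisj (Fin.val_injective.ne hij)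
  have hm0 : 0 ≤ ⨆ i, |l i| := Real.iSup_nonneg fun i => abs_nonneg _
  have hm : ∀ i, |l i| ≤ ⨆ i, |l i| := le_ciSup (Finite.bddAbove_range _)
  have hupper := abs_sum_mul_sub_le l hdisjN (fun i => hF i) hm0 hm
  refine ⟨Real.iSup_le (fun i => ?_) (lipNorm_nonneg _), lipNorm_le (by positivity) hupper⟩
  simpa [hnorm] using abs_mul_lipNorm_le_lipNorm_sum l hdisjN (bddAbove_lipRatios hupper)
    (fun i j => hxz i j) (fun i y hy j hji => hsep i y hy j (Fin.val_injective.ne hji)) i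

/-- Lemma 3.8: a sequence of norm-one Lipschitz functions with 'well separated' supports
is 2-equivalent to the canonical basis of `c₀` in `Lip₀(M)`. -/
theorem stmt7 {M : Type*} [MetricSpace M] (base : M)
    (f : ℕ → M → ℝ)
    (hlip : ∀ n, ∃ C : NNReal, LipschitzWith C (f n))
    (h0 : ∀ n, f n base = 0)
    (hnorm : ∀ n, lipNorm (f n) = 1)
    (x : ℕ → M)
    (hx : ∀ n, x n ∉ ⋃ k : ℕ, {p : M | f k p ≠ 0})
    (hsep : ∀ n, ∀ y ∈ {p : M | f n p ≠ 0},
      ∀ k : ℕ, k ≠ n → ∀ q ∈ {p : M | f k p ≠ 0}, dist y (x n) < dist y q) :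
    ∀ (N : ℕ) (l : Fin N → ℝ),
      (⨆ i, |l i|) ≤ lipNorm (fun p => ∑ i, l i * f (i : ℕ) p) ∧
      lipNorm (fun p => ∑ i, l i * f (i : ℕ) p) ≤ 2 * (⨆ i, |l i|) :=
  stmt7_general f hnorm x hx hsep
end

section
/- Let K be a compact Hausdorff space, (Vₙ) a sequence of pairwise disjoint open subsets of K, tₙ ∈ Vₙ, δ > 0, 0 < ε < δ/2, and (εₙ) positive reals with Σ εₙ < ε. Suppose (gₙ) is a sequence in C(K) with ‖gₙ‖ ≤ 1, |gₙ(tₙ)| ≥ δ, and |gₙ(t)| < εₙ for all t ∉ Vₙ. Then for all scalars λ₁, …, λ_p: (δ/2)·max|λⱼ| ≤ ‖Σⱼ λⱼ gⱼ‖ ≤ (1 + ε)·max|λⱼ|; in particular (gₙ) is equivalent to the canonical basis of c₀. -/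
/-!
By disjointness, a point lies in at most one `Vᵢ`, so at every point all but one term of
`∑ λᵢ gᵢ` is bounded by `max |λⱼ| · εᵢ`, and these remainders add up to at most `max |λⱼ| · ε`.
The remaining term is at most `max |λⱼ|` everywhere, which gives the upper bound; evaluating at
`tᵢ` for an index maximizing `|λᵢ|`, it is at least `δ · max |λⱼ|`, which gives the lower bound.
-/

open Finset Function

section DisjointBumps

variable {ι X : Type*} [Fintype ι]

lemma exists_forall_ne_notMem_of_pairwise_disjoint [Nonempty ι] {V : ι → Set X}
    (hV : Pairwise (Disjoint on V)) (x : X) : ∃ i₀, ∀ i ≠ i₀, x ∉ V i := by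
  by_cases hx : ∃ i₀, x ∈ V i₀
  · obtain ⟨i₀, hi₀⟩ := hx
    exact ⟨i₀, fun i hi hxi => Set.disjoint_left.mp (hV hi) hxi hi₀⟩
  · push Not at hx
    exact ⟨Classical.arbitrary ι, fun i _ => hx i⟩

lemma abs_sum_mul_sub_mul_le {l c e : ι → ℝ} {M ε : ℝ} (i₀ : ι) (hl : ∀ i, |l i| ≤ M)
    (hc : ∀ i ≠ i₀, |c i| ≤ e i) (he0 : ∀ i, 0 ≤ e i) (hε : ∑ i, e i ≤ ε) :
    |∑ i, l i * c i - l i₀ * c i₀| ≤ M * ε := by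
  classical
  have hM : 0 ≤ M := (abs_nonneg _).trans (hl i₀)
  rw [← sum_erase_eq_sub (mem_univ i₀)]
  calc |∑ i ∈ univ.erase i₀, l i * c i|
      ≤ ∑ i ∈ univ.erase i₀, |l i| * |c i| := by
        simpa only [abs_mul] using abs_sum_le_sum_abs (fun i => l i * c i) _
    _ ≤ ∑ i ∈ univ.erase i₀, M * e i :=
        sum_le_sum fun i hi =>
          mul_le_mul (hl i) (hc i (ne_of_mem_erase hi)) (abs_nonneg _) hM
    _ ≤ M * ε := by
        rw [← mul_sum]
        exact mul_le_mul_of_nonneg_left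
          ((sum_le_univ_sum_of_nonneg he0).trans hε) hM

variable [TopologicalSpace X] {V : ι → Set X} {g : ι → C(X, ℝ)} {e : ι → ℝ} {ε : ℝ}

lemma ContinuousMap.sum_smul_apply (l : ι → ℝ) (x : X) :
    (∑ i, l i • g i) x = ∑ i, l i * g i x := by
  simp only [ContinuousMap.sum_apply, ContinuousMap.smul_apply, smul_eq_mul]

variable [CompactSpace X]

lemma norm_sum_smul_le_of_pairwise_disjoint (hV : Pairwise (Disjoint on V))
    (hg1 : ∀ i, ‖g i‖ ≤ 1) (hgout : ∀ i, ∀ x ∉ V i, |g i x| ≤ e i)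
    (he0 : ∀ i, 0 ≤ e i) (hε : ∑ i, e i ≤ ε) (l : ι → ℝ) :
    ‖∑ i, l i • g i‖ ≤ (1 + ε) * ⨆ i, |l i| := by
  have hl : ∀ i, |l i| ≤ ⨆ i, |l i| := le_ciSup (Set.finite_range _).bddAbove
  have hM : 0 ≤ ⨆ i, |l i| := Real.iSup_nonneg fun i => abs_nonneg _
  have hε0 : 0 ≤ ε := (sum_nonneg fun i _ => he0 i).trans hε
  refine (ContinuousMap.norm_le _ (by positivity)).mpr fun x => ?_
  cases isEmpty_or_nonempty ι
  · simp
  obtain ⟨i₀, hi₀⟩ := exists_forall_ne_notMem_of_pairwise_disjoint hV x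
  have hrest := abs_sum_mul_sub_mul_le i₀ hl (fun i hi => hgout i x (hi₀ i hi)) he0 hε
  have hmain : |l i₀ * g i₀ x| ≤ ⨆ i, |l i| := by
    rw [abs_mul]
    exact (mul_le_of_le_one_right (abs_nonneg _)
      (((g i₀).norm_coe_le_norm x).trans (hg1 i₀))).trans (hl i₀)
  have htriangle := abs_sub_abs_le_abs_sub (∑ i, l i * g i x) (l i₀ * g i₀ x)
  rw [ContinuousMap.sum_smul_apply, Real.norm_eq_abs]
  linarith

lemma sub_mul_iSup_le_norm_sum_smul {t : ι → X} {δ : ℝ} (hV : Pairwise (Disjoint on V))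
    (ht : ∀ i, t i ∈ V i) (hgt : ∀ i, δ ≤ |g i (t i)|) (hgout : ∀ i, ∀ x ∉ V i, |g i x| ≤ e i)
    (he0 : ∀ i, 0 ≤ e i) (hε : ∑ i, e i ≤ ε) (l : ι → ℝ) :
    (δ - ε) * ⨆ i, |l i| ≤ ‖∑ i, l i • g i‖ := by
  cases isEmpty_or_nonempty ι
  · simp
  obtain ⟨i₀, hi₀⟩ := exists_eq_ciSup_of_finite (f := fun i => |l i|)
  rw [← hi₀]
  have hl : ∀ i, |l i| ≤ |l i₀| := fun i =>
    hi₀ ▸ le_ciSup (f := fun i => |l i|) (Set.finite_range _).bddAbove i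
  have hrest := abs_sum_mul_sub_mul_le i₀ hl
    (fun i hi => hgout i (t i₀) fun hmem => Set.disjoint_left.mp (hV hi) hmem (ht i₀)) he0 hε
  have hmain : |l i₀| * δ ≤ |l i₀ * g i₀ (t i₀)| := by
    rw [abs_mul]
    exact mul_le_mul_of_nonneg_left (hgt i₀) (abs_nonneg _)
  have htriangle := abs_sub_abs_le_abs_sub (l i₀ * g i₀ (t i₀))
    (l i₀ * g i₀ (t i₀) - ∑ i, l i * g i (t i₀))
  rw [sub_sub_cancel, abs_sub_comm (l i₀ * g i₀ (t i₀))] at htriangle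
  have heval := (∑ i, l i • g i).norm_coe_le_norm (t i₀)
  rw [ContinuousMap.sum_smul_apply, Real.norm_eq_abs] at heval
  linarith

end DisjointBumps

theorem stmt10_general {K : Type*} [TopologicalSpace K] [CompactSpace K]
    (V : ℕ → Set K)
    (hVdisj : Pairwise fun n m => Disjoint (V n) (V m))
    (t : ℕ → K) (ht : ∀ n, t n ∈ V n)
    (δ ε : ℝ) (hεδ : ε < δ / 2)
    (e : ℕ → ℝ) (he : ∀ n, 0 < e n)
    (hesum : ∑' n, e n < ε) (hesummable : Summable e)
    (g : ℕ → C(K, ℝ)) (hg1 : ∀ n, ‖g n‖ ≤ 1)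
    (hgt : ∀ n, δ ≤ |g n (t n)|)
    (hgout : ∀ n, ∀ s ∉ V n, |g n s| < e n) :
    ∀ (p : ℕ) (l : Fin p → ℝ),
      (δ / 2) * (⨆ j, |l j|) ≤ ‖∑ j, l j • g (j : ℕ)‖ ∧
      ‖∑ j, l j • g (j : ℕ)‖ ≤ (1 + ε) * (⨆ j, |l j|) := by
  intro p l
  have hV : Pairwise (Disjoint on fun j : Fin p => V j) :=
    hVdisj.comp_of_injective Fin.val_injective
  have hgout' : ∀ j : Fin p, ∀ s ∉ V j, |g j s| ≤ e j := fun j s hs => (hgout j s hs).le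
  have he0 : ∀ j : Fin p, 0 ≤ e j := fun j => (he j).le
  have hε : ∑ j : Fin p, e j ≤ ε := by
    rw [Fin.sum_univ_eq_sum_range e p]
    exact (hesummable.sum_le_tsum _ fun n _ => (he n).le).trans hesum.le
  have hM : 0 ≤ ⨆ j, |l j| := Real.iSup_nonneg fun j => abs_nonneg _
  refine ⟨?_, norm_sum_smul_le_of_pairwise_disjoint hV (fun j => hg1 j) hgout' he0 hε l⟩
  calc δ / 2 * ⨆ j, |l j| ≤ (δ - ε) * ⨆ j, |l j| := by gcongr; linarith
    _ ≤ ‖∑ j, l j • g (j : ℕ)‖ :=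
        sub_mul_iSup_le_norm_sum_smul hV (fun j => ht j) (fun j => hgt j) hgout' he0 hε l

/-- Functions `gₙ ∈ C(K)` essentially supported in pairwise disjoint open sets, with
`|gₙ(tₙ)| ≥ δ` and small outside `Vₙ`, are equivalent to the `c₀` basis. -/
theorem stmt10 {K : Type*} [TopologicalSpace K] [CompactSpace K] [T2Space K]
    (V : ℕ → Set K) (hVopen : ∀ n, IsOpen (V n))
    (hVdisj : Pairwise fun n m => Disjoint (V n) (V m))
    (t : ℕ → K) (ht : ∀ n, t n ∈ V n)
    (δ ε : ℝ) (hδ : 0 < δ) (hε0 : 0 < ε) (hεδ : ε < δ / 2)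
    (e : ℕ → ℝ) (he : ∀ n, 0 < e n)
    (hesum : ∑' n, e n < ε) (hesummable : Summable e)
    (g : ℕ → C(K, ℝ)) (hg1 : ∀ n, ‖g n‖ ≤ 1)
    (hgt : ∀ n, δ ≤ |g n (t n)|)
    (hgout : ∀ n, ∀ s ∉ V n, |g n s| < e n) :
    ∀ (p : ℕ) (l : Fin p → ℝ),
      (δ / 2) * (⨆ j, |l j|) ≤ ‖∑ j, l j • g (j : ℕ)‖ ∧
      ‖∑ j, l j • g (j : ℕ)‖ ≤ (1 + ε) * (⨆ j, |l j|) :=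
  stmt10_general V hVdisj t ht δ ε hεδ e he hesum hesummable g hg1 hgt hgout
end

section
/- Let X be a Banach space. If X is almost square (ASQ), then X has the sequential SD2P. -/
open Filter Topology

/-- The sequential strong diameter two property. -/
def SeqSD2P (X : Type*) [NormedAddCommGroup X] [NormedSpace ℝ X] : Prop :=
  ∀ (m : ℕ) (x : Fin m → X), (∀ i, ‖x i‖ = 1) →
    ∃ (y : Fin m → ℕ → X) (z : ℕ → X),
      (∀ i n, ‖y i n‖ = 1) ∧ (∀ n, ‖z n‖ = 1) ∧
      (∀ i, Tendsto (fun n => ‖x i - y i n‖) atTop (𝓝 0) ∨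
        IsEquivC0Basis (fun n => x i - y i n)) ∧
      IsEquivC0Basis z ∧
      (∀ i, Tendsto (fun n => ‖y i n + z n‖) atTop (𝓝 1) ∧
        Tendsto (fun n => ‖y i n - z n‖) atTop (𝓝 1))

/-- `P : X → ℝ` is a continuous `N`-homogeneous polynomial. -/
def IsHomogPoly {X : Type*} [NormedAddCommGroup X] [NormedSpace ℝ X]
    (N : ℕ) (P : X → ℝ) : Prop :=
  ∃ A : ContinuousMultilinearMap ℝ (fun _ : Fin N => X) ℝ, ∀ x, P x = A (fun _ => x)

/-- The norm of a polynomial: its supremum on the closed unit ball. -/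
noncomputable def polyNorm {X : Type*} [NormedAddCommGroup X] [NormedSpace ℝ X]
    (P : X → ℝ) : ℝ :=
  sSup {r : ℝ | ∃ x : X, ‖x‖ ≤ 1 ∧ r = |P x|}

/-!
Take `yₙⁱ = xᵢ`. Applying ASQ to a finite net of the unit sphere of a finite-dimensional
subspace `V` gives a unit vector `z` with `(1 - ε) max ‖v‖ |t| ≤ ‖v + t z‖ ≤ (1 + ε) max ‖v‖ |t|`
for all `v ∈ V` and `t ∈ ℝ`. Choosing `zₙ` this way over the span of the `xᵢ` and
`z₀, …, zₙ₋₁`, with `εₙ = 2^-(n+2)`, gives `‖xᵢ ± zₙ‖ → 1`, and the summable errors keep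
`‖∑ lᵢ zᵢ‖` between `max |lᵢ| / 2` and `2 max |lᵢ|`.
-/

open Submodule

section AlmostSquare

variable {X : Type*} [NormedAddCommGroup X] [NormedSpace ℝ X]

def IsAlmostSquareOver (V : Submodule ℝ X) (ε : ℝ) (z : X) : Prop :=
  ∀ v ∈ V, ∀ t : ℝ, ‖v + t • z‖ ≤ (1 + ε) * max ‖v‖ |t|

namespace IsAlmostSquareOver

variable {V W : Submodule ℝ X} {ε : ℝ} {z : X}

lemma mono (h : IsAlmostSquareOver W ε z) (hVW : V ≤ W) : IsAlmostSquareOver V ε z :=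
  fun v hv => h v (hVW hv)

/-- The upper `ℓ∞²` estimate at `t` and `-t` forces the lower one. -/
lemma le_norm_add_smul (h : IsAlmostSquareOver V ε z) (hz : ‖z‖ = 1) {v : X} (hv : v ∈ V)
    (t : ℝ) : (1 - ε) * max ‖v‖ |t| ≤ ‖v + t • z‖ := by
  have hplus := h v hv t
  have hminus : ‖v - t • z‖ ≤ (1 + ε) * max ‖v‖ |t| := by
    simpa [sub_eq_add_neg] using h v hv (-t)
  have hv2 : 2 * ‖v‖ ≤ ‖v + t • z‖ + ‖v - t • z‖ := by
    calc 2 * ‖v‖ = ‖(v + t • z) + (v - t • z)‖ := by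
          rw [show (v + t • z) + (v - t • z) = (2 : ℝ) • v by module, norm_smul]; simp
      _ ≤ _ := norm_add_le _ _
  have ht2 : 2 * |t| ≤ ‖v + t • z‖ + ‖v - t • z‖ := by
    calc 2 * |t| = ‖(v + t • z) - (v - t • z)‖ := by
          rw [show (v + t • z) - (v - t • z) = (2 * t) • z by module, norm_smul, hz]
          simp
      _ ≤ _ := norm_sub_le _ _
  rcases max_cases ‖v‖ |t| with ⟨hm, _⟩ | ⟨hm, _⟩ <;> rw [hm] at hplus hminus ⊢ <;> linarith

lemma abs_norm_add_smul_sub_one_le (h : IsAlmostSquareOver V ε z) (hz : ‖z‖ = 1) {v : X}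
    (hv : v ∈ V) (hv1 : ‖v‖ = 1) {t : ℝ} (ht : |t| = 1) : |‖v + t • z‖ - 1| ≤ ε := by
  have hlow := h.le_norm_add_smul hz hv t
  have hup := h v hv t
  rw [hv1, ht, max_self, mul_one] at hlow hup
  exact abs_sub_le_iff.2 ⟨by linarith, by linarith⟩

end IsAlmostSquareOver

lemma norm_add_smul_le_of_abs_le_one {a b : X} {c s : ℝ} (hplus : ‖a + b‖ ≤ c)
    (hminus : ‖a - b‖ ≤ c) (hs : |s| ≤ 1) : ‖a + s • b‖ ≤ c := by
  obtain ⟨hs₁, hs₂⟩ := abs_le.1 hs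
  calc ‖a + s • b‖ = ‖((1 + s) / 2) • (a + b) + ((1 - s) / 2) • (a - b)‖ := by
        congr 1; module
    _ ≤ (1 + s) / 2 * ‖a + b‖ + (1 - s) / 2 * ‖a - b‖ := by
        refine (norm_add_le _ _).trans ?_
        rw [norm_smul, norm_smul, Real.norm_of_nonneg (by linarith),
          Real.norm_of_nonneg (by linarith)]
    _ ≤ (1 + s) / 2 * c + (1 - s) / 2 * c := by gcongr; linarith
    _ = c := by ring

lemma norm_add_smul_le_of_norm_add_sub_le {v z : X} {c : ℝ}
    (hplus : ‖v + z‖ ≤ c) (hminus : ‖v - z‖ ≤ c) (t : ℝ) : ‖v + t • z‖ ≤ c * max 1 |t| := by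
  rcases le_or_gt |t| 1 with ht | ht
  · exact (norm_add_smul_le_of_abs_le_one hplus hminus ht).trans
      (le_mul_of_one_le_right (le_trans (norm_nonneg _) hplus) (le_max_left _ _))
  · have ht0 : t ≠ 0 := by rintro rfl; norm_num at ht
    have hzv : ‖z + t⁻¹ • v‖ ≤ c := by
      refine norm_add_smul_le_of_abs_le_one (by rwa [add_comm]) (by rwa [norm_sub_rev]) ?_
      rw [abs_inv]; exact inv_le_one_of_one_le₀ ht.le
    calc ‖v + t • z‖ = |t| * ‖z + t⁻¹ • v‖ := by
          rw [← Real.norm_eq_abs, ← norm_smul, smul_add, smul_smul, mul_inv_cancel₀ ht0,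
            one_smul, add_comm]
      _ ≤ |t| * c := by gcongr
      _ = c * max 1 |t| := by rw [max_eq_right ht.le, mul_comm]

lemma isAlmostSquareOver_of_unit {V : Submodule ℝ X} {ε : ℝ} {z : X} (hz : ‖z‖ = 1)
    (hε : 0 ≤ ε) (h : ∀ v ∈ V, ‖v‖ = 1 → ∀ t : ℝ, ‖v + t • z‖ ≤ (1 + ε) * max 1 |t|) :
    IsAlmostSquareOver V ε z := by
  intro v hv t
  rcases eq_or_ne v 0 with rfl | hv0
  · rw [zero_add, norm_smul, hz, mul_one, norm_zero, Real.norm_eq_abs,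
      max_eq_right (abs_nonneg t)]
    nlinarith [abs_nonneg t]
  · have hr : 0 < ‖v‖ := norm_pos_iff.2 hv0
    have hunit : ‖‖v‖⁻¹ • v‖ = 1 := by
      rw [norm_smul, norm_inv, norm_norm, inv_mul_cancel₀ hr.ne']
    calc ‖v + t • z‖ = ‖v‖ * ‖‖v‖⁻¹ • v + (t / ‖v‖) • z‖ := by
          rw [← Real.norm_of_nonneg hr.le, ← norm_smul, Real.norm_of_nonneg hr.le, smul_add,
            smul_smul, smul_smul, mul_inv_cancel₀ hr.ne', mul_div_cancel₀ _ hr.ne', one_smul]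
      _ ≤ ‖v‖ * ((1 + ε) * max 1 |t / ‖v‖|) := by
          gcongr; exact h _ (V.smul_mem _ hv) hunit _
      _ = (1 + ε) * max ‖v‖ |t| := by
          rw [abs_div, abs_norm, mul_left_comm, mul_max_of_nonneg _ _ hr.le, mul_one,
            mul_div_cancel₀ _ hr.ne']

namespace ASQ

lemma exists_unit_near_square (hX : ASQ X) {S : Set X} (hS : S.Finite)
    (hS1 : ∀ v ∈ S, ‖v‖ = 1) {δ : ℝ} (hδ : 0 < δ) :
    ∃ z : X, ‖z‖ = 1 ∧ ∀ v ∈ S, ‖v + z‖ ≤ 1 + δ ∧ ‖v - z‖ ≤ 1 + δ := by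
  have := hS.to_subtype
  obtain ⟨k, ⟨e⟩⟩ := Finite.exists_equiv_fin S
  obtain ⟨y, hy1, hylim, hysq⟩ := hX k (fun i => e.symm i) fun i => hS1 _ (e.symm i).2
  have hev : ∀ᶠ n in atTop, (0 < ‖y n‖ ∧ 1 - δ / 2 < ‖y n‖) ∧
      ∀ i, ‖(e.symm i : X) + y n‖ < 1 + δ / 2 ∧ ‖(e.symm i : X) - y n‖ < 1 + δ / 2 := by
    refine ((hylim.eventually (eventually_gt_nhds one_pos)).and
      (hylim.eventually (eventually_gt_nhds (by linarith)))).and (eventually_all.2 fun i => ?_)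
    exact ((hysq i).1.eventually (eventually_lt_nhds (by linarith))).and
      ((hysq i).2.eventually (eventually_lt_nhds (by linarith)))
  obtain ⟨N, ⟨hyN, hN⟩, hNsq⟩ := hev.exists
  have hdist : ‖‖y N‖⁻¹ • y N - y N‖ < δ / 2 := by
    rw [show ‖y N‖⁻¹ • y N - y N = (‖y N‖⁻¹ - 1) • y N by module, norm_smul,
      Real.norm_of_nonneg (by rw [sub_nonneg]; exact one_le_inv₀ hyN |>.2 (hy1 N)), sub_mul,
      inv_mul_cancel₀ hyN.ne']
    linarith
  refine ⟨‖y N‖⁻¹ • y N, by rw [norm_smul, norm_inv, norm_norm, inv_mul_cancel₀ hyN.ne'],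
    fun v hv => ?_⟩
  obtain ⟨hplus, hminus⟩ := hNsq (e ⟨v, hv⟩)
  simp only [Equiv.symm_apply_apply] at hplus hminus
  constructor
  · calc ‖v + ‖y N‖⁻¹ • y N‖ = ‖(v + y N) + (‖y N‖⁻¹ • y N - y N)‖ := by congr 1; abel
      _ ≤ _ := norm_add_le _ _
      _ ≤ 1 + δ := by linarith
  · calc ‖v - ‖y N‖⁻¹ • y N‖ = ‖(v - y N) - (‖y N‖⁻¹ • y N - y N)‖ := by congr 1; abel
      _ ≤ _ := norm_sub_le _ _
      _ ≤ 1 + δ := by linarith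

/-- Compactness of the unit sphere of `V` reduces this to finitely many unit vectors. -/
theorem exists_isAlmostSquareOver (hX : ASQ X) (V : Submodule ℝ X) [FiniteDimensional ℝ V]
    {ε : ℝ} (hε : 0 < ε) : ∃ z : X, ‖z‖ = 1 ∧ IsAlmostSquareOver V ε z := by
  set S : Set X := Subtype.val '' Metric.sphere (0 : V) 1
  have hSmem : ∀ w ∈ S, w ∈ V ∧ ‖w‖ = 1 := by
    rintro _ ⟨w, hw, rfl⟩
    exact ⟨w.2, by simpa using hw⟩
  obtain ⟨T, hTS, hT, hcover⟩ := Metric.finite_approx_of_totallyBounded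
    ((isCompact_sphere (0 : V) 1).image continuous_subtype_val).totallyBounded (ε / 2)
    (by linarith)
  obtain ⟨z, hz, hzT⟩ := hX.exists_unit_near_square hT (fun w hw => (hSmem w (hTS hw)).2)
    (half_pos hε)
  refine ⟨z, hz, isAlmostSquareOver_of_unit hz hε.le fun v hv hv1 t => ?_⟩
  obtain ⟨w, hwT, hvw⟩ := Set.mem_iUnion₂.1 (hcover ⟨⟨v, hv⟩, by simpa using hv1, rfl⟩)
  rw [Metric.mem_ball, dist_eq_norm] at hvw
  have hwt := norm_add_smul_le_of_norm_add_sub_le (hzT w hwT).1 (hzT w hwT).2 t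
  calc ‖v + t • z‖ = ‖(w + t • z) + (v - w)‖ := by congr 1; abel
    _ ≤ (1 + ε / 2) * max 1 |t| + ε / 2 := (norm_add_le _ _).trans (by gcongr)
    _ ≤ (1 + ε) * max 1 |t| := by nlinarith [le_max_left 1 |t|]

theorem exists_seq_isAlmostSquareOver (hX : ASQ X) (S : Finset X) {ε : ℕ → ℝ}
    (hε : ∀ n, 0 < ε n) :
    ∃ z : ℕ → X, (∀ n, ‖z n‖ = 1) ∧
      ∀ n, IsAlmostSquareOver (span ℝ (S ∪ z '' Set.Iio n)) (ε n) (z n) := by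
  classical
  choose next hnext_norm hnext_sq using
    fun (F : Finset X) (n : ℕ) => hX.exists_isAlmostSquareOver (span ℝ (F : Set X)) (hε n)
  let F : ℕ → Finset X := fun n => Nat.rec S (fun k Fk => insert (next Fk k) Fk) n
  have hFmono : Monotone F := monotone_nat_of_le_succ fun n => Finset.subset_insert _ _
  refine ⟨fun n => next (F n) n, fun n => hnext_norm _ _,
    fun n => (hnext_sq _ _).mono (span_le.2 ?_)⟩
  rintro v (hv | ⟨k, hk, rfl⟩)
  · exact subset_span (hFmono (Nat.zero_le n) hv)
  · exact subset_span (hFmono (Nat.succ_le_of_lt hk) (Finset.mem_insert_self _ _))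

end ASQ

/-- With `q = (1/2)^(n+2)`, the constants `1/2 + 2q` and `2 - 4q` absorb the factors `1 ∓ q`
of the next step and stay within `[1/2, 2]`. -/
lemma norm_sum_smul_bounds {z : ℕ → X} (hz : ∀ n, ‖z n‖ = 1)
    (hsq : ∀ n, IsAlmostSquareOver (span ℝ (z '' Set.Iio n)) ((1 / 2) ^ (n + 2)) (z n))
    (n : ℕ) (l : Fin n → ℝ) :
    (∀ j, (1 / 2 + (1 / 2) ^ (n + 1)) * |l j| ≤ ‖∑ i, l i • z i‖) ∧
      ∀ M, 0 ≤ M → (∀ i, |l i| ≤ M) → ‖∑ i, l i • z i‖ ≤ (2 - (1 / 2) ^ n) * M := by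
  induction n with
  | zero => exact ⟨fun j => j.elim0, fun M hM _ => by simpa using hM⟩
  | succ n ih =>
    set u := ∑ i : Fin n, l i.castSucc • z i
    set t := l (Fin.last n)
    have hsum : ∑ i, l i • z i = u + t • z n := by
      simp only [Fin.sum_univ_castSucc, Fin.val_castSucc, Fin.val_last, u, t]
    have hu : u ∈ span ℝ (z '' Set.Iio n) :=
      sum_mem fun i _ => smul_mem _ _ (subset_span ⟨i, i.isLt, rfl⟩)
    obtain ⟨ihlow, ihup⟩ := ih fun i => l i.castSucc
    have hlow := (hsq n).le_norm_add_smul (hz n) hu t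
    have hup := hsq n u hu t
    set q : ℝ := (1 / 2) ^ (n + 2)
    have hq : 0 < q := by positivity
    have hq4 : q ≤ 1 / 4 := by
      calc q ≤ (1 / 2) ^ 2 := pow_le_pow_of_le_one (by norm_num) (by norm_num) (by omega)
        _ = 1 / 4 := by norm_num
    have hq1 : (1 / 2 : ℝ) ^ (n + 1) = 2 * q := by simp only [q, pow_succ]; ring
    have hq0 : (1 / 2 : ℝ) ^ n = 4 * q := by simp only [q, pow_succ]; ring
    rw [hsum]
    refine ⟨fun j => ?_, fun M hM hl => ?_⟩
    · refine le_trans ?_ hlow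
      induction j using Fin.lastCases with
      | last => nlinarith [abs_nonneg t, le_max_right ‖u‖ |t|]
      | cast j =>
        have := ihlow j
        rw [hq1] at this
        nlinarith [abs_nonneg (l j.castSucc), le_max_left ‖u‖ |t|]
    · have huM := ihup M hM fun i => hl _
      rw [hq0] at huM
      rw [hq1]
      have hmax : max ‖u‖ |t| ≤ (2 - 4 * q) * M := max_le huM (by nlinarith [hl (Fin.last n)])
      nlinarith

theorem isEquivC0Basis_of_isAlmostSquareOver {z : ℕ → X} (hz : ∀ n, ‖z n‖ = 1)
    (hsq : ∀ n, IsAlmostSquareOver (span ℝ (z '' Set.Iio n)) ((1 / 2) ^ (n + 2)) (z n)) :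
    IsEquivC0Basis z := by
  refine ⟨1 / 2, 2, by norm_num, by norm_num, fun n l => ?_⟩
  obtain ⟨hlow, hup⟩ := norm_sum_smul_bounds hz hsq n l
  have hsup : 0 ≤ ⨆ i, |l i| := Real.iSup_nonneg fun i => abs_nonneg _
  constructor
  · have hq : (0 : ℝ) ≤ (1 / 2) ^ (n + 1) := by positivity
    have : (⨆ i, |l i|) ≤ 2 * ‖∑ i, l i • z i‖ :=
      Real.iSup_le (fun j => by nlinarith [hlow j, abs_nonneg (l j)]) (by positivity)
    linarith
  · have hle : ∀ i, |l i| ≤ ⨆ j, |l j| := fun i =>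
      le_ciSup (f := fun j => |l j|) (Set.finite_range _).bddAbove i
    refine (hup _ hsup hle).trans ?_
    nlinarith [pow_nonneg (show (0 : ℝ) ≤ 1 / 2 by norm_num) n]

end AlmostSquare

theorem stmt12_general {X : Type*} [NormedAddCommGroup X] [NormedSpace ℝ X]
    (hX : ASQ X) : SeqSD2P X := by
  classical
  intro m x hx
  have hε : ∀ n : ℕ, (0 : ℝ) < (1 / 2) ^ (n + 2) := fun n => by positivity
  obtain ⟨z, hz, hsq⟩ := hX.exists_seq_isAlmostSquareOver (Finset.univ.image x) hε
  have hεlim : Tendsto (fun n : ℕ => ((1 : ℝ) / 2) ^ (n + 2)) atTop (𝓝 0) :=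
    (tendsto_pow_atTop_nhds_zero_of_lt_one (by norm_num) (by norm_num)).comp
      (tendsto_add_atTop_nat 2)
  have hnear : ∀ i (s : ℝ), |s| = 1 → Tendsto (fun n => ‖x i + s • z n‖) atTop (𝓝 1) :=
    fun i s hs => tendsto_iff_norm_sub_tendsto_zero.2 <| squeeze_zero (fun _ => norm_nonneg _)
      (fun n => (hsq n).abs_norm_add_smul_sub_one_le (hz n)
        (subset_span (Or.inl (by simp))) (hx i) hs) hεlim
  refine ⟨fun i _ => x i, z, fun i _ => hx i, hz, fun i => Or.inl (by simp),
    isEquivC0Basis_of_isAlmostSquareOver hz fun n =>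
      (hsq n).mono (span_mono Set.subset_union_right),
    fun i => ⟨by simpa using hnear i 1 (by simp),
      by simpa [sub_eq_add_neg] using hnear i (-1) (by simp)⟩⟩

/-- Every ASQ Banach space has the sequential SD2P. -/
theorem stmt12 {X : Type*} [NormedAddCommGroup X] [NormedSpace ℝ X] [CompleteSpace X]
    (hX : ASQ X) : SeqSD2P X :=
  stmt12_general hX
end

section
/- Let X and Y be Banach spaces, x₁,…,x_k ∈ S_X, u₁,…,u_k ∈ S_Y, and suppose x ∈ S_X, y ∈ S_Y satisfy ‖xⱼ ± x‖ < (1 + ε)^{1/2} and ‖uⱼ ± y‖ < (1 + ε)^{1/2} for all j, for some ε > 0. Then ‖xⱼ ⊗ uⱼ + x ⊗ y‖_{X ⊗̂π Y} < 1 + ε for every j ∈ {1, …, k}. -/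
open TensorProduct

/-- The projective tensor norm on the algebraic tensor product `X ⊗ Y`. -/
noncomputable def projNorm {X Y : Type*} [NormedAddCommGroup X] [NormedSpace ℝ X]
    [NormedAddCommGroup Y] [NormedSpace ℝ Y] (u : X ⊗[ℝ] Y) : ℝ :=
  sInf {r : ℝ | ∃ (n : ℕ) (x : Fin n → X) (y : Fin n → Y),
    u = ∑ i, x i ⊗ₜ[ℝ] y i ∧ r = ∑ i, ‖x i‖ * ‖y i‖}

section

variable {X Y : Type*} [NormedAddCommGroup X] [NormedSpace ℝ X]
  [NormedAddCommGroup Y] [NormedSpace ℝ Y]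

theorem projNorm_le_of_eq_sum {n : ℕ} (x : Fin n → X) (y : Fin n → Y) {u : X ⊗[ℝ] Y}
    (hu : u = ∑ i, x i ⊗ₜ[ℝ] y i) : projNorm u ≤ ∑ i, ‖x i‖ * ‖y i‖ :=
  csInf_le ⟨0, by rintro r ⟨n, x, y, -, rfl⟩; positivity⟩ ⟨n, x, y, hu, rfl⟩

theorem tmul_add_tmul_eq_half_smul (a x : X) (c y : Y) :
    a ⊗ₜ[ℝ] c + x ⊗ₜ[ℝ] y =
      ((1 / 2 : ℝ) • (a + x)) ⊗ₜ[ℝ] (c + y) + ((1 / 2 : ℝ) • (a - x)) ⊗ₜ[ℝ] (c - y) := by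
  simp only [← smul_tmul', add_tmul, sub_tmul, tmul_add, tmul_sub]
  module

theorem projNorm_tmul_add_tmul_le (a x : X) (c y : Y) :
    projNorm (a ⊗ₜ[ℝ] c + x ⊗ₜ[ℝ] y) ≤ (‖a + x‖ * ‖c + y‖ + ‖a - x‖ * ‖c - y‖) / 2 := by
  have h := projNorm_le_of_eq_sum ![(1 / 2 : ℝ) • (a + x), (1 / 2 : ℝ) • (a - x)] ![c + y, c - y]
    (by simpa [Fin.sum_univ_two] using tmul_add_tmul_eq_half_smul a x c y)
  simp only [Fin.sum_univ_two, Matrix.cons_val_zero, Matrix.cons_val_one, norm_smul] at h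
  norm_num at h
  linarith

theorem projNorm_tmul_add_tmul_lt_sq {a x : X} {c y : Y} {s : ℝ}
    (hax : ‖a + x‖ < s) (hax' : ‖a - x‖ < s) (hcy : ‖c + y‖ < s) (hcy' : ‖c - y‖ < s) :
    projNorm (a ⊗ₜ[ℝ] c + x ⊗ₜ[ℝ] y) < s ^ 2 := by
  have hplus := mul_lt_mul'' hax hcy (norm_nonneg _) (norm_nonneg _)
  have hminus := mul_lt_mul'' hax' hcy' (norm_nonneg _) (norm_nonneg _)
  linarith [projNorm_tmul_add_tmul_le a x c y]

end

theorem stmt15_general {X Y : Type*} [NormedAddCommGroup X] [NormedSpace ℝ X]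
    [NormedAddCommGroup Y] [NormedSpace ℝ Y]
    (k : ℕ) (xs : Fin k → X) (us : Fin k → Y)
    (x : X) (y : Y)
    (ε : ℝ) (hε : 0 < ε)
    (h1 : ∀ j, ‖xs j + x‖ < (1 + ε) ^ ((1 : ℝ) / 2))
    (h2 : ∀ j, ‖xs j - x‖ < (1 + ε) ^ ((1 : ℝ) / 2))
    (h3 : ∀ j, ‖us j + y‖ < (1 + ε) ^ ((1 : ℝ) / 2))
    (h4 : ∀ j, ‖us j - y‖ < (1 + ε) ^ ((1 : ℝ) / 2)) :
    ∀ j, projNorm (xs j ⊗ₜ[ℝ] us j + x ⊗ₜ[ℝ] y) < 1 + ε := by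
  intro j
  have hsq : ((1 + ε) ^ ((1 : ℝ) / 2)) ^ 2 = 1 + ε := by
    rw [← Real.sqrt_eq_rpow, Real.sq_sqrt (by linarith)]
  exact hsq ▸ projNorm_tmul_add_tmul_lt_sq (h1 j) (h2 j) (h3 j) (h4 j)

theorem stmt15 {X Y : Type*} [NormedAddCommGroup X] [NormedSpace ℝ X] [CompleteSpace X]
    [NormedAddCommGroup Y] [NormedSpace ℝ Y] [CompleteSpace Y]
    (k : ℕ) (xs : Fin k → X) (us : Fin k → Y)
    (hxs : ∀ j, ‖xs j‖ = 1) (hus : ∀ j, ‖us j‖ = 1)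
    (x : X) (y : Y) (hx : ‖x‖ = 1) (hy : ‖y‖ = 1)
    (ε : ℝ) (hε : 0 < ε)
    (h1 : ∀ j, ‖xs j + x‖ < (1 + ε) ^ ((1 : ℝ) / 2))
    (h2 : ∀ j, ‖xs j - x‖ < (1 + ε) ^ ((1 : ℝ) / 2))
    (h3 : ∀ j, ‖us j + y‖ < (1 + ε) ^ ((1 : ℝ) / 2))
    (h4 : ∀ j, ‖us j - y‖ < (1 + ε) ^ ((1 : ℝ) / 2)) :
    ∀ j, projNorm (xs j ⊗ₜ[ℝ] us j + x ⊗ₜ[ℝ] y) < 1 + ε :=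
  stmt15_general k xs us x y ε hε h1 h2 h3 h4
end

section
/- Let X be a Banach space, N ∈ ℕ, and suppose that for every finite family P₁,…,P_n of norm-one N-homogeneous continuous polynomials on X and every ε > 0 there exists f ∈ S_{X*} with ‖Pᵢ + f^N‖ > 2 − ε for all i. Then the norm of 𝒫(^N X) is octahedral. -/
open Filter Topology

/-!
Restricting `x ↦ A (x, …, x)` to the closed unit ball embeds `𝒫(^N X)` isometrically into the
bounded continuous functions on the ball. Given finitely many polynomials spanning `W`, take a
finite `ε/2`-net `U` of the unit sphere of `W` and, by hypothesis, `q = f^N` of norm one with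
`‖U j + q‖ > 2 - ε/2`; then `‖w + q‖ > 2 - ε` for every unit vector `w ∈ W`. For such `w`
and `a ≥ b ≥ 0`, `‖a • w + b • q‖ ≥ a ‖w + q‖ - (a - b) ‖q‖ ≥ (1 - ε) (a + b)`.
-/

open Metric

section Octahedral

variable {E : Type*} [NormedAddCommGroup E] [NormedSpace ℝ E]

lemma mul_add_le_norm_smul_add_smul {w q : E} (hw : ‖w‖ ≤ 1) (hq : ‖q‖ ≤ 1) {η : ℝ}
    (hwq : 2 - η ≤ ‖w + q‖) {a b : ℝ} (ha : 0 ≤ a) (hb : 0 ≤ b) :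
    (1 - η) * (a + b) ≤ ‖a • w + b • q‖ := by
  have hη : 0 ≤ η := by linarith [norm_add_le w q]
  wlog hba : b ≤ a generalizing w q a b
  · simpa only [add_comm] using this hq hw (by rwa [add_comm]) hb ha (le_of_not_ge hba)
  calc (1 - η) * (a + b) ≤ a * (2 - η) - (a - b) * 1 := by nlinarith
    _ ≤ a * ‖w + q‖ - (a - b) * ‖q‖ := by gcongr
    _ ≤ ‖a • (w + q)‖ - ‖(a - b) • q‖ := by
      rw [norm_smul, norm_smul, Real.norm_of_nonneg ha, Real.norm_of_nonneg (by linarith)]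
    _ ≤ ‖a • w + b • q‖ := by
      rw [show a • w + b • q = a • (w + q) - (a - b) • q by module]
      exact norm_sub_norm_le _ _

lemma exists_fin_net_unitSphere (W : Submodule ℝ E) [FiniteDimensional ℝ W] {δ : ℝ}
    (hδ : 0 < δ) :
    ∃ (n : ℕ) (U : Fin n → E), (∀ j, U j ∈ W ∧ ‖U j‖ = 1) ∧
      ∀ w ∈ W, ‖w‖ = 1 → ∃ j, ‖w - U j‖ < δ := by
  have hS : IsCompact {w : E | w ∈ W ∧ ‖w‖ = 1} := by
    convert (isCompact_sphere (0 : W) 1).image continuous_subtype_val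
    ext w
    simp [and_comm]
  obtain ⟨t, htS, htfin, hcover⟩ := finite_approx_of_totallyBounded hS.totallyBounded δ hδ
  obtain ⟨n, U, -, rfl⟩ := htfin.fin_param
  refine ⟨n, U, fun j => htS ⟨j, rfl⟩, fun w hw hw1 => ?_⟩
  obtain ⟨-, ⟨j, rfl⟩, hj⟩ := Set.mem_iUnion₂.mp (hcover ⟨hw, hw1⟩)
  exact ⟨j, by simpa [dist_eq_norm] using hj⟩

section Net

variable {W : Submodule ℝ E} {n : ℕ} {U : Fin n → E} {q : E} {δ : ℝ}

lemma mul_add_le_norm_add_smul_of_nonneg (hδ : 0 ≤ δ)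
    (hnet : ∀ w ∈ W, ‖w‖ = 1 → ∃ j, ‖w - U j‖ < δ) (hq : ‖q‖ = 1)
    (hUq : ∀ j, 2 - δ < ‖U j + q‖) {v : E} (hv : v ∈ W) {lam : ℝ} (hlam : 0 ≤ lam) :
    (1 - 2 * δ) * (‖v‖ + lam) ≤ ‖v + lam • q‖ := by
  rcases eq_or_ne v 0 with rfl | hv0
  · rw [zero_add, norm_smul, hq, norm_zero, Real.norm_of_nonneg hlam]
    nlinarith
  set w := ‖v‖⁻¹ • v
  have hw1 : ‖w‖ = 1 := norm_smul_inv_norm hv0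
  obtain ⟨j, hj⟩ := hnet w (W.smul_mem _ hv) hw1
  have hwq : 2 - 2 * δ ≤ ‖w + q‖ := by
    have : U j + q = (w + q) - (w - U j) := by abel
    linarith [hUq j, this ▸ norm_sub_le (w + q) (w - U j)]
  have hvw : ‖v‖ • w = v := smul_inv_smul₀ (norm_ne_zero_iff.mpr hv0) v
  simpa [hvw] using
    mul_add_le_norm_smul_add_smul hw1.le hq.le hwq (norm_nonneg v) hlam

lemma mul_add_abs_le_norm_add_smul (hδ : 0 ≤ δ)
    (hnet : ∀ w ∈ W, ‖w‖ = 1 → ∃ j, ‖w - U j‖ < δ) (hq : ‖q‖ = 1)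
    (hUq : ∀ j, 2 - δ < ‖U j + q‖) {v : E} (hv : v ∈ W) (lam : ℝ) :
    (1 - 2 * δ) * (‖v‖ + |lam|) ≤ ‖v + lam • q‖ := by
  rcases le_total 0 lam with hlam | hlam
  · rw [abs_of_nonneg hlam]
    exact mul_add_le_norm_add_smul_of_nonneg hδ hnet hq hUq hv hlam
  · have := mul_add_le_norm_add_smul_of_nonneg hδ hnet hq hUq (W.neg_mem hv)
      (neg_nonneg.mpr hlam)
    rw [abs_of_nonpos hlam]
    rwa [norm_neg, neg_smul, ← neg_add, norm_neg] at this

end Net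

end Octahedral

section Polynomials

variable {X : Type*} [NormedAddCommGroup X] [NormedSpace ℝ X]

lemma polyNorm_eq_norm {P : X → ℝ} (F : BoundedContinuousFunction (closedBall (0 : X) 1) ℝ)
    (hF : ∀ y, F y = P y) : polyNorm P = ‖F‖ := by
  rw [BoundedContinuousFunction.norm_eq_iSup_norm, polyNorm]
  congr 1
  ext r
  simp only [Set.mem_ofPred_eq, Set.mem_range, hF, Real.norm_eq_abs, Subtype.exists,
    mem_closedBall_zero_iff]
  exact ⟨fun ⟨x, hx, hr⟩ => ⟨x, hx, hr.symm⟩, fun ⟨x, hx, hr⟩ => ⟨x, hx, hr.symm⟩⟩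

lemma polyNorm_pow_apply (f : X →L[ℝ] ℝ) (N : ℕ) :
    polyNorm (fun x => f x ^ N) = ‖f‖ ^ N := by
  set S := (fun x => ‖f x‖) '' closedBall (0 : X) 1
  have hset : {r : ℝ | ∃ x : X, ‖x‖ ≤ 1 ∧ r = |f x ^ N|} = (· ^ N) '' S := by
    ext r
    simp [S, eq_comm, abs_pow]
  have hS : S.Nonempty := (nonempty_closedBall.mpr zero_le_one).image _
  have hSbdd : BddAbove S := ⟨‖f‖, by
    rintro - ⟨x, hx, rfl⟩
    exact f.unit_le_opNorm x (mem_closedBall_zero_iff.mp hx)⟩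
  rw [polyNorm, hset, ← f.sSup_unitClosedBall_eq_norm]
  refine (MonotoneOn.map_csSup_of_continuousWithinAt (continuous_pow N).continuousWithinAt
    ?_ hS hSbdd).symm
  rintro - ⟨x, -, rfl⟩ - ⟨y, -, rfl⟩ hxy
  exact pow_le_pow_left₀ (norm_nonneg _) hxy N

lemma isHomogPoly_pow_apply (f : X →L[ℝ] ℝ) (N : ℕ) : IsHomogPoly N (fun x => f x ^ N) :=
  ⟨(ContinuousMultilinearMap.mkPiAlgebra ℝ (Fin N) ℝ).compContinuousLinearMap fun _ => f,
    fun x => by simp⟩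

variable (X) in
noncomputable def diagonalOnBall (N : ℕ) :
    ContinuousMultilinearMap ℝ (fun _ : Fin N => X) ℝ →ₗ[ℝ]
      BoundedContinuousFunction (closedBall (0 : X) 1) ℝ where
  toFun A := .ofNormedAddCommGroup (fun y => A fun _ => (y : X))
    (A.cont.comp (continuous_pi fun _ => continuous_subtype_val)) ‖A‖ fun y =>
      A.unit_le_opNorm <| (pi_norm_le_iff_of_nonneg zero_le_one).mpr fun _ =>
        mem_closedBall_zero_iff.mp y.2
  map_add' _ _ := rfl
  map_smul' _ _ := rfl

@[simp]
lemma diagonalOnBall_apply (N : ℕ) (A : ContinuousMultilinearMap ℝ (fun _ : Fin N => X) ℝ)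
    (y : closedBall (0 : X) 1) : diagonalOnBall X N A y = A fun _ => (y : X) := rfl

end Polynomials

theorem stmt17_general {X : Type*} [NormedAddCommGroup X] [NormedSpace ℝ X]
    (N : ℕ)
    (h : ∀ (n : ℕ) (P : Fin n → X → ℝ), (∀ i, IsHomogPoly N (P i)) →
      (∀ i, polyNorm (P i) = 1) → ∀ ε : ℝ, 0 < ε →
        ∃ f : X →L[ℝ] ℝ, ‖f‖ = 1 ∧
          ∀ i, polyNorm (fun x => P i x + (f x) ^ N) > 2 - ε) :
    ∀ (m : ℕ) (P : Fin m → X → ℝ), (∀ i, IsHomogPoly N (P i)) →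
      ∀ ε : ℝ, 0 < ε →
        ∃ Q : X → ℝ, IsHomogPoly N Q ∧ polyNorm Q = 1 ∧
          ∀ (c : Fin m → ℝ) (lam : ℝ),
            polyNorm (fun x => (∑ i, c i * P i x) + lam * Q x) ≥
              (1 - ε) * (polyNorm (fun x => ∑ i, c i * P i x) + |lam|) := by
  intro m P hP ε hε
  choose A hA using hP
  set T := diagonalOnBall X N
  set W := (Submodule.span ℝ (Set.range A)).map T
  have := FiniteDimensional.span_of_finite ℝ (Set.finite_range A)
  obtain ⟨n, U, hU, hnet⟩ := exists_fin_net_unitSphere W (half_pos hε)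
  choose B hB using fun j => (Submodule.mem_map.mp (hU j).1).imp fun _ => And.right
  obtain ⟨f, hf1, hf⟩ := h n (fun j x => B j fun _ => x) (fun j => ⟨B j, fun _ => rfl⟩)
    (fun j => by rw [polyNorm_eq_norm (U j) fun y => by rw [← hB j]; rfl, (hU j).2])
    (ε / 2) (half_pos hε)
  obtain ⟨C, hC⟩ := isHomogPoly_pow_apply f N
  simp only at hC
  have hQ : polyNorm (fun x => f x ^ N) = 1 := by rw [polyNorm_pow_apply, hf1, one_pow]
  have hTC : ‖T C‖ = 1 := (polyNorm_eq_norm (T C) fun y => by simp [T, hC]).symm.trans hQ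
  have hUTC : ∀ j, 2 - ε / 2 < ‖U j + T C‖ := fun j => by
    rw [← hB j, ← map_add, ← polyNorm_eq_norm (P := fun x => B j (fun _ => x) + f x ^ N) _
      fun y => by simp [T, hC]]
    exact hf j
  refine ⟨_, ⟨C, hC⟩, hQ, fun c lam => ?_⟩
  have hv : T (∑ i, c i • A i) ∈ W := Submodule.mem_map_of_mem
    (Submodule.sum_smul_mem _ _ fun i _ => Submodule.subset_span ⟨i, rfl⟩)
  rw [ge_iff_le, polyNorm_eq_norm (T (∑ i, c i • A i)) fun y => by simp [T, hA],
    polyNorm_eq_norm (T (∑ i, c i • A i) + lam • T C) fun y => by simp [T, hA, hC]]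
  have := mul_add_abs_le_norm_add_smul (half_pos hε).le hnet hTC hUTC hv lam
  rwa [mul_div_cancel₀ ε two_ne_zero] at this

/-- If for every finite family of norm-one `N`-homogeneous polynomials `P₁,…,Pₙ` and every
`ε > 0` there is `f ∈ S_{X*}` with `‖Pᵢ + f^N‖ > 2 − ε` for all `i`, then the norm of
`𝒫(^N X)` is octahedral (stated via finitely many spanning polynomials). -/
theorem stmt17 {X : Type*} [NormedAddCommGroup X] [NormedSpace ℝ X] [CompleteSpace X]
    (N : ℕ) (hN : 1 ≤ N)
    (h : ∀ (n : ℕ) (P : Fin n → X → ℝ), (∀ i, IsHomogPoly N (P i)) →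
      (∀ i, polyNorm (P i) = 1) → ∀ ε : ℝ, 0 < ε →
        ∃ f : X →L[ℝ] ℝ, ‖f‖ = 1 ∧
          ∀ i, polyNorm (fun x => P i x + (f x) ^ N) > 2 - ε) :
    ∀ (m : ℕ) (P : Fin m → X → ℝ), (∀ i, IsHomogPoly N (P i)) →
      ∀ ε : ℝ, 0 < ε →
        ∃ Q : X → ℝ, IsHomogPoly N Q ∧ polyNorm Q = 1 ∧
          ∀ (c : Fin m → ℝ) (lam : ℝ),
            polyNorm (fun x => (∑ i, c i * P i x) + lam * Q x) ≥
              (1 - ε) * (polyNorm (fun x => ∑ i, c i * P i x) + |lam|) :=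
  stmt17_general N h
end
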